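/- arXiv:2002.02338 — 5 statements merged into one kernel-verified Lean document; each statement's English description precedes it below -/
import Mathlib

section
/- The set 𝒜 of iterated areas of letters generates the shuffle algebra: the smallest unital ⧢-subalgebra of T(ℝ^d) containing 𝒜 is all of T(ℝ^d). -/
open scoped TensorProduct

set_option maxSynthPendingDepth 3

noncomputable section

abbrev Word (d : ℕ) := List (Fin d)
abbrev Ten (d : ℕ) := Word d →₀ ℝ

variable {d : ℕ}

def wd (w : Word d) : Ten d := Finsupp.single w 1

def lift2 (f : Word d → Word d → Ten d) : Ten d →ₗ[ℝ] Ten d →ₗ[ℝ] Ten d :=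
  Finsupp.lsum ℝ fun u => LinearMap.toSpanSingleton ℝ (Ten d →ₗ[ℝ] Ten d)
    (Finsupp.lsum ℝ fun v => LinearMap.toSpanSingleton ℝ (Ten d) (f u v))

def shR : Word d → Word d → Ten d
  | [], v => wd v.reverse
  | a :: u, [] => wd (a :: u).reverse
  | a :: u, b :: v =>
      Finsupp.mapDomain (fun w => w ++ [a]) (shR u (b :: v)) +
        Finsupp.mapDomain (fun w => w ++ [b]) (shR (a :: u) v)
termination_by u v => u.length + v.length

def shW (u v : Word d) : Ten d := shR u.reverse v.reverse

def shuffle : Ten d →ₗ[ℝ] Ten d →ₗ[ℝ] Ten d := lift2 shW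

def hsW (u v : Word d) : Ten d :=
  match v.getLast? with
  | none => 0
  | some b => Finsupp.mapDomain (fun w => w ++ [b]) (shW u v.dropLast)

def halfSh : Ten d →ₗ[ℝ] Ten d →ₗ[ℝ] Ten d := lift2 hsW

def areaOp (x y : Ten d) : Ten d := halfSh x y - halfSh y x

def concW (u v : Word d) : Ten d := wd (u ++ v)

def concM : Ten d →ₗ[ℝ] Ten d →ₗ[ℝ] Ten d := lift2 concW

def brk (x y : Ten d) : Ten d := concM x y - concM y x

/-- `X` generates the shuffle algebra: the smallest unital ⧢-subalgebra containing `X` is all. -/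
def ShuffleGen (X : Set (Ten d)) : Prop :=
  ∀ p : Submodule ℝ (Ten d), wd ([] : Word d) ∈ p → X ⊆ ↑p →
    (∀ x ∈ p, ∀ y ∈ p, shuffle x y ∈ p) → ∀ z : Ten d, z ∈ p

def shPow (x : Ten d) : ℕ → Ten d
  | 0 => wd []
  | n + 1 => shuffle x (shPow x n)

def monEval (X : Set (Ten d)) (m : ↥X →₀ ℕ) : Ten d :=
  (m.support.toList.map fun v : ↥X => shPow (v : Ten d) (m v)).foldr (fun a b => shuffle a b) (wd [])

def polyEval (X : Set (Ten d)) (p : MvPolynomial (↥X) ℝ) : Ten d :=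
  ∑ m ∈ p.support, MvPolynomial.coeff m p • monEval X m

/-- `X` freely generates the shuffle algebra. -/
def FreeShuffleGen (X : Set (Ten d)) : Prop :=
  ShuffleGen X ∧ Function.Bijective (polyEval (d := d) X)

/-- Homogeneous component of degree `n`. -/
def Tn (d n : ℕ) : Submodule ℝ (Ten d) :=
  Submodule.span ℝ {x | ∃ w : Word d, w.length = n ∧ x = wd w}

/-- The free Lie algebra: smallest subspace containing the letters, closed under bracket. -/
def freeLie (d : ℕ) : Submodule ℝ (Ten d) :=
  sInf {p | (∀ i : Fin d, wd [i] ∈ p) ∧ ∀ x ∈ p, ∀ y ∈ p, brk x y ∈ p}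

/-- Pairing making the words orthonormal. -/
def pairT (x y : Ten d) : ℝ := x.sum fun w c => c * y w

/-- Smallest subspace containing the letters, closed under area. -/
def areaCl (d : ℕ) : Submodule ℝ (Ten d) :=
  sInf {p | (∀ i : Fin d, wd [i] ∈ p) ∧ ∀ x ∈ p, ∀ y ∈ p, areaOp x y ∈ p}

def rhoW : Word d → Ten d
  | [] => 0
  | [i] => wd [i]
  | i :: j :: u =>
      concM (wd [i]) (rhoW (j :: u)) -
        concM (wd [(j :: u).getLast (by simp)]) (rhoW (i :: (j :: u).dropLast))
termination_by w => w.length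
decreasing_by
  · simp
  · simp [List.length_dropLast]

def rhoMap : Ten d →ₗ[ℝ] Ten d :=
  Finsupp.lsum ℝ fun w => LinearMap.toSpanSingleton ℝ (Ten d) (rhoW w)

/-- Right-bracketing (Dynkin) map on words. -/
def rW : Word d → Ten d
  | [] => 0
  | [i] => wd [i]
  | i :: j :: u => brk (wd [i]) (rW (j :: u))

def rMap : Ten d →ₗ[ℝ] Ten d :=
  Finsupp.lsum ℝ fun w => LinearMap.toSpanSingleton ℝ (Ten d) (rW w)

def wordsLen (d n : ℕ) : Finset (Word d) :=
  (Finset.univ : Finset (Fin n → Fin d)).image List.ofFn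

def Rtens (d n : ℕ) : Ten d ⊗[ℝ] Ten d :=
  ∑ w ∈ wordsLen d n, wd w ⊗ₜ[ℝ] rW w

def top2 (f g : Ten d →ₗ[ℝ] Ten d →ₗ[ℝ] Ten d) :
    Ten d ⊗[ℝ] Ten d →ₗ[ℝ] Ten d ⊗[ℝ] Ten d →ₗ[ℝ] Ten d ⊗[ℝ] Ten d :=
  TensorProduct.lift
    (((TensorProduct.mapBilinear (RingHom.id ℝ) (Ten d) (Ten d) (Ten d) (Ten d)).comp f).compl₂ g)

def brkL : Ten d →ₗ[ℝ] Ten d →ₗ[ℝ] Ten d := concM (d := d) - (concM (d := d)).flip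

def areaL : Ten d →ₗ[ℝ] Ten d →ₗ[ℝ] Ten d := halfSh (d := d) - (halfSh (d := d)).flip

/-- The ▷ operation on the tensor square. -/
def rop : Ten d ⊗[ℝ] Ten d →ₗ[ℝ] Ten d ⊗[ℝ] Ten d →ₗ[ℝ] Ten d ⊗[ℝ] Ten d :=
  top2 halfSh brkL

/-- The symmetrized operation ▷_Sym. -/
def ropSym : Ten d ⊗[ℝ] Ten d →ₗ[ℝ] Ten d ⊗[ℝ] Ten d →ₗ[ℝ] Ten d ⊗[ℝ] Ten d :=
  top2 areaL brkL

/-- The ■ product: shuffle on the left, concatenation on the right. -/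
def bop : Ten d ⊗[ℝ] Ten d →ₗ[ℝ] Ten d ⊗[ℝ] Ten d →ₗ[ℝ] Ten d ⊗[ℝ] Ten d :=
  top2 shuffle concM

/-- Labelled binary trees over the alphabet. -/
inductive LTree (d : ℕ) : Type
  | leaf : Fin d → LTree d
  | node : LTree d → LTree d → LTree d

def leavesT : LTree d → ℕ
  | .leaf _ => 1
  | .node a b => leavesT a + leavesT b

def areaT : LTree d → Ten d
  | .leaf i => wd [i]
  | .node a b => areaOp (areaT a) (areaT b)

def lieT : LTree d → Ten d
  | .leaf i => wd [i]
  | .node a b => brk (lieT a) (lieT b)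

def cT : LTree d → ℕ
  | .leaf _ => 1
  | .node a b => 2 * cT a * cT b * (leavesT a + leavesT b - 1)

-- ### plumbing
lemma lift2_wd (f : Word d → Word d → Ten d) (u v : Word d) :
    lift2 f (wd u) (wd v) = f u v := by
  simp [lift2, wd, Finsupp.lsum_single, LinearMap.toSpanSingleton_apply]

lemma shuffle_wd (u v : Word d) : shuffle (wd u) (wd v) = shW u v := lift2_wd _ u v
lemma halfSh_wd (u v : Word d) : halfSh (wd u) (wd v) = hsW u v := lift2_wd _ u v
lemma concM_wd (u v : Word d) : concM (wd u) (wd v) = concW u v := lift2_wd _ u v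

/-- append a letter at the end, as a linear map -/
def appL (c : Fin d) : Ten d →ₗ[ℝ] Ten d :=
  Finsupp.lmapDomain ℝ ℝ (fun w => w ++ [c])

lemma appL_wd (c : Fin d) (u : Word d) : appL c (wd u) = wd (u ++ [c]) := by
  simp [appL, wd, Finsupp.mapDomain_single]

lemma appL_eq (c : Fin d) (x : Ten d) :
    Finsupp.mapDomain (fun w => w ++ [c]) x = appL c x := rfl

-- word level basics
lemma shR_nil_right (u : Word d) : shR u [] = wd u.reverse := by
  cases u <;> simp [shR]

lemma shW_nil_left (v : Word d) : shW [] v = wd v := by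
  simp [shW, shR]

lemma shW_nil_right (u : Word d) : shW u [] = wd u := by
  simp [shW, shR_nil_right]

lemma shW_snoc_snoc (u v : Word d) (a b : Fin d) :
    shW (u ++ [a]) (v ++ [b]) =
      appL a (shW u (v ++ [b])) + appL b (shW (u ++ [a]) v) := by
  simp only [shW, List.reverse_append, List.reverse_cons, List.reverse_nil, List.nil_append,
    List.cons_append]
  rw [shR]
  rfl

lemma hsW_nil_right (u : Word d) : hsW u [] = 0 := rfl

lemma hsW_snoc (u v : Word d) (b : Fin d) :
    hsW u (v ++ [b]) = appL b (shW u v) := by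
  simp [hsW, List.getLast?_concat, List.dropLast_concat, appL_eq]

lemma hsW_nil_left (v : Word d) (b : Fin d) : hsW [] (v ++ [b]) = wd (v ++ [b]) := by
  rw [hsW_snoc, shW_nil_left, appL_wd]

-- ### extension helpers
lemma wd_ext {M : Type*} [AddCommGroup M] [Module ℝ M] {F G : Ten d →ₗ[ℝ] M}
    (h : ∀ w, F (wd w) = G (wd w)) : F = G := by
  apply Finsupp.lhom_ext
  intro w r
  have hs : (Finsupp.single w r : Ten d) = r • wd w := by
    simp [wd, Finsupp.smul_single]
  rw [hs, map_smul, map_smul, h]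

lemma wd_ext_app {M : Type*} [AddCommGroup M] [Module ℝ M] {F G : Ten d →ₗ[ℝ] M}
    (h : ∀ w, F (wd w) = G (wd w)) (x : Ten d) : F x = G x := by
  rw [wd_ext h]

-- element-level basics
lemma shuffle_nil_right (x : Ten d) : shuffle x (wd []) = x :=
  wd_ext_app (F := shuffle.flip (wd [])) (G := LinearMap.id)
    (fun w => by simp [LinearMap.flip_apply, shuffle_wd, shW_nil_right]) x

lemma shuffle_nil_left (x : Ten d) : shuffle (wd []) x = x :=
  wd_ext_app (F := shuffle (wd [])) (G := LinearMap.id)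
    (fun w => by simp [shuffle_wd, shW_nil_left]) x

lemma halfSh_nil_right (x : Ten d) : halfSh x (wd []) = 0 :=
  wd_ext_app (F := halfSh.flip (wd [])) (G := 0)
    (fun w => by simp [LinearMap.flip_apply, halfSh_wd, hsW_nil_right]) x

lemma halfSh_appL (c : Fin d) (x y : Ten d) :
    halfSh x (appL c y) = appL c (shuffle x y) := by
  refine wd_ext_app (F := (halfSh x).comp (appL c)) (G := (appL c).comp (shuffle x))
    (fun v => ?_) y
  simp only [LinearMap.comp_apply, appL_wd]
  refine wd_ext_app (F := halfSh.flip (wd (v ++ [c])))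
    (G := (appL c).comp (shuffle.flip (wd v))) (fun u => ?_) x
  simp only [LinearMap.comp_apply, LinearMap.flip_apply]
  rw [halfSh_wd, hsW_snoc, shuffle_wd]

-- commutativity
lemma shW_comm (u v : Word d) : shW u v = shW v u := by
  suffices H : ∀ n (u v : Word d), u.length + v.length = n → shW u v = shW v u by
    exact H _ u v rfl
  intro n
  induction n using Nat.strong_induction_on with
  | _ n IH =>
    intro u v hn
    rcases List.eq_nil_or_concat u with rfl | ⟨p, a, rfl⟩
    · rw [shW_nil_left, shW_nil_right]
    rcases List.eq_nil_or_concat v with rfl | ⟨q, b, rfl⟩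
    · rw [shW_nil_left, shW_nil_right]
    simp only [List.concat_eq_append] at hn ⊢
    rw [shW_snoc_snoc, shW_snoc_snoc]
    subst hn
    rw [IH (p.length + (q ++ [b]).length) (by simp) p (q ++ [b]) rfl,
      IH ((p ++ [a]).length + q.length) (by simp) (p ++ [a]) q rfl, add_comm]

lemma shuffle_comm (x y : Ten d) : shuffle x y = shuffle y x := by
  refine wd_ext_app (F := shuffle x) (G := shuffle.flip x) (fun v => ?_) y
  refine wd_ext_app (F := shuffle.flip (wd v)) (G := shuffle (wd v)) (fun u => ?_) x
  simp only [LinearMap.flip_apply]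
  rw [shuffle_wd, shuffle_wd, shW_comm]

-- shuffle = sum of half-shuffles (second argument a nonempty word)
lemma shW_eq_hsW (u v : Word d) (hv : v ≠ []) : shW u v = hsW u v + hsW v u := by
  rcases List.eq_nil_or_concat v with rfl | ⟨r, b, rfl⟩
  · exact absurd rfl hv
  simp only [List.concat_eq_append]
  rcases List.eq_nil_or_concat u with rfl | ⟨p, a, rfl⟩
  · rw [shW_nil_left, hsW_nil_left, hsW_nil_right, add_zero]
  simp only [List.concat_eq_append]
  rw [shW_snoc_snoc, hsW_snoc, hsW_snoc, shW_comm (r ++ [b]) p, add_comm]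

lemma shuffle_eq_halfSh (x : Ten d) (v : Word d) (hv : v ≠ []) :
    shuffle x (wd v) = halfSh x (wd v) + halfSh (wd v) x := by
  refine wd_ext_app (F := shuffle.flip (wd v))
    (G := halfSh.flip (wd v) + halfSh (wd v)) (fun u => ?_) x
  simp only [LinearMap.flip_apply, LinearMap.add_apply]
  rw [shuffle_wd, halfSh_wd, halfSh_wd, shW_eq_hsW u v hv]

lemma shuffle_appL (c : Fin d) (x y : Ten d) :
    shuffle x (appL c y) = appL c (shuffle x y) + halfSh (appL c y) x := by
  refine wd_ext_app (F := (shuffle x).comp (appL c))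
    (G := (appL c).comp (shuffle x) + (halfSh.flip x).comp (appL c)) (fun v => ?_) y
  simp only [LinearMap.comp_apply, LinearMap.add_apply, LinearMap.flip_apply, appL_wd]
  rw [shuffle_eq_halfSh x (v ++ [c]) (by simp), ← appL_wd c v, halfSh_appL, add_comm]

-- recursion at element level
lemma shuffle_rec (a b : Fin d) (x y : Ten d) :
    shuffle (appL a x) (appL b y) =
      appL a (shuffle x (appL b y)) + appL b (shuffle (appL a x) y) := by
  refine wd_ext_app (F := (shuffle.flip (appL b y)).comp (appL a))
    (G := (appL a).comp (shuffle.flip (appL b y)) +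
      (appL b).comp ((shuffle.flip y).comp (appL a))) (fun u => ?_) x
  simp only [LinearMap.comp_apply, LinearMap.add_apply, LinearMap.flip_apply, appL_wd]
  refine wd_ext_app (F := (shuffle (wd (u ++ [a]))).comp (appL b))
    (G := (appL a).comp ((shuffle (wd u)).comp (appL b)) +
      (appL b).comp (shuffle (wd (u ++ [a])))) (fun v => ?_) y
  simp only [LinearMap.comp_apply, LinearMap.add_apply, appL_wd]
  rw [shuffle_wd, shuffle_wd, shuffle_wd, shW_snoc_snoc]

-- associativity, word level
lemma shW_assoc (u v w : Word d) :
    shuffle (shuffle (wd u) (wd v)) (wd w) = shuffle (wd u) (shuffle (wd v) (wd w)) := by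
  suffices H : ∀ n (u v w : Word d), u.length + v.length + w.length = n →
      shuffle (shuffle (wd u) (wd v)) (wd w) = shuffle (wd u) (shuffle (wd v) (wd w)) by
    exact H _ u v w rfl
  intro n
  induction n using Nat.strong_induction_on with
  | _ n IH =>
    intro u v w hn
    rcases List.eq_nil_or_concat u with rfl | ⟨p, a, rfl⟩
    · rw [shuffle_nil_left, shuffle_nil_left]
    rcases List.eq_nil_or_concat v with rfl | ⟨q, b, rfl⟩
    · rw [shuffle_nil_right, shuffle_nil_left]
    rcases List.eq_nil_or_concat w with rfl | ⟨r, c, rfl⟩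
    · rw [shuffle_nil_right, shuffle_nil_right]
    simp only [List.concat_eq_append] at hn ⊢
    subst hn
    have e1 : wd (p ++ [a]) = appL a (wd p) := (appL_wd a p).symm
    have e3 : wd (r ++ [c]) = appL c (wd r) := (appL_wd c r).symm
    have IH1 := IH (p.length + (q ++ [b]).length + (r ++ [c]).length) (by simp)
      p (q ++ [b]) (r ++ [c]) rfl
    have IH2 := IH ((p ++ [a]).length + q.length + (r ++ [c]).length) (by simp)
      (p ++ [a]) q (r ++ [c]) rfl
    have IH3 := IH ((p ++ [a]).length + (q ++ [b]).length + r.length) (by simp)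
      (p ++ [a]) (q ++ [b]) r rfl
    have huv : shuffle (wd (p ++ [a])) (wd (q ++ [b])) =
        appL a (shuffle (wd p) (wd (q ++ [b]))) + appL b (shuffle (wd (p ++ [a])) (wd q)) := by
      rw [shuffle_wd, shW_snoc_snoc, shuffle_wd, shuffle_wd]
    have hvw : shuffle (wd (q ++ [b])) (wd (r ++ [c])) =
        appL b (shuffle (wd q) (wd (r ++ [c]))) + appL c (shuffle (wd (q ++ [b])) (wd r)) := by
      rw [shuffle_wd, shW_snoc_snoc, shuffle_wd, shuffle_wd]
    have hLHS : shuffle (shuffle (wd (p ++ [a])) (wd (q ++ [b]))) (wd (r ++ [c])) =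
        appL a (shuffle (shuffle (wd p) (wd (q ++ [b]))) (wd (r ++ [c])))
        + appL b (shuffle (shuffle (wd (p ++ [a])) (wd q)) (wd (r ++ [c])))
        + appL c (shuffle (shuffle (wd (p ++ [a])) (wd (q ++ [b]))) (wd r)) := by
      conv_lhs => rw [huv, e3]
      rw [map_add, LinearMap.add_apply, shuffle_rec, shuffle_rec, ← e3]
      conv_rhs => rw [huv]
      rw [map_add, LinearMap.add_apply, map_add]
      abel
    have hRHS : shuffle (wd (p ++ [a])) (shuffle (wd (q ++ [b])) (wd (r ++ [c]))) =
        appL a (shuffle (wd p) (shuffle (wd (q ++ [b])) (wd (r ++ [c]))))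
        + appL b (shuffle (wd (p ++ [a])) (shuffle (wd q) (wd (r ++ [c]))))
        + appL c (shuffle (wd (p ++ [a])) (shuffle (wd (q ++ [b])) (wd r))) := by
      conv_lhs => rw [hvw, e1]
      rw [map_add, shuffle_rec, shuffle_rec, ← e1]
      conv_rhs => rw [hvw]
      simp only [map_add]
      abel
    rw [hLHS, hRHS, IH1, IH2, IH3]

-- element-level associativity
lemma shuffle_assoc (x y z : Ten d) :
    shuffle (shuffle x y) z = shuffle x (shuffle y z) := by
  refine wd_ext_app (F := shuffle (shuffle x y)) (G := (shuffle x).comp (shuffle y))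
    (fun w => ?_) z
  simp only [LinearMap.comp_apply]
  refine wd_ext_app (F := (shuffle.flip (wd w)).comp (shuffle x))
    (G := (shuffle x).comp (shuffle.flip (wd w))) (fun v => ?_) y
  simp only [LinearMap.comp_apply, LinearMap.flip_apply]
  refine wd_ext_app (F := (shuffle.flip (wd w)).comp (shuffle.flip (wd v)))
    (G := shuffle.flip (shuffle (wd v) (wd w))) (fun u => ?_) x
  simp only [LinearMap.comp_apply, LinearMap.flip_apply]
  exact shW_assoc u v w

-- Zinbiel law
lemma zinbiel (x y z : Ten d) :
    halfSh (shuffle x y) z = halfSh x (halfSh y z) := by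
  refine wd_ext_app (F := halfSh (shuffle x y)) (G := (halfSh x).comp (halfSh y))
    (fun w => ?_) z
  simp only [LinearMap.comp_apply]
  refine wd_ext_app (F := (halfSh.flip (wd w)).comp (shuffle x))
    (G := (halfSh x).comp (halfSh.flip (wd w))) (fun v => ?_) y
  simp only [LinearMap.comp_apply, LinearMap.flip_apply]
  refine wd_ext_app (F := (halfSh.flip (wd w)).comp (shuffle.flip (wd v)))
    (G := (halfSh.flip (halfSh (wd v) (wd w)))) (fun u => ?_) x
  simp only [LinearMap.comp_apply, LinearMap.flip_apply]
  rcases List.eq_nil_or_concat w with rfl | ⟨r, c, rfl⟩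
  · rw [halfSh_nil_right, halfSh_nil_right, map_zero]
  simp only [List.concat_eq_append]
  rw [← appL_wd c r, halfSh_appL, halfSh_appL, halfSh_appL, shW_assoc]

-- the submodule spanned by nonempty words
def Pos : Submodule ℝ (Ten d) :=
  Submodule.span ℝ {x | ∃ (v : Word d) (c : Fin d), x = wd (v ++ [c])}

lemma wd_mem_pos (v : Word d) (c : Fin d) : wd (v ++ [c]) ∈ (Pos : Submodule ℝ (Ten d)) :=
  Submodule.subset_span ⟨v, c, rfl⟩

lemma appL_mem_pos (c : Fin d) (x : Ten d) : appL c x ∈ (Pos : Submodule ℝ (Ten d)) := by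
  induction x using Finsupp.induction_linear with
  | zero => rw [map_zero]; exact Submodule.zero_mem _
  | add a b ha hb => rw [map_add]; exact Submodule.add_mem _ ha hb
  | single w r =>
      have : (Finsupp.single w r : Ten d) = r • wd w := by simp [wd, Finsupp.smul_single]
      rw [this, map_smul]
      exact Submodule.smul_mem _ _ (by rw [appL_wd]; exact wd_mem_pos w c)

lemma halfSh_mem_pos (x y : Ten d) : halfSh x y ∈ (Pos : Submodule ℝ (Ten d)) := by
  induction y using Finsupp.induction_linear with
  | zero => rw [map_zero]; exact Submodule.zero_mem _
  | add a b ha hb => rw [map_add]; exact Submodule.add_mem _ ha hb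
  | single w r =>
      have : (Finsupp.single w r : Ten d) = r • wd w := by simp [wd, Finsupp.smul_single]
      rw [this, map_smul]
      refine Submodule.smul_mem _ _ ?_
      rcases List.eq_nil_or_concat w with rfl | ⟨r', c, rfl⟩
      · rw [halfSh_nil_right]; exact Submodule.zero_mem _
      · simp only [List.concat_eq_append]
        rw [← appL_wd, halfSh_appL]
        exact appL_mem_pos _ _

lemma halfSh_empty_left {x : Ten d} (hx : x ∈ (Pos : Submodule ℝ (Ten d))) :
    halfSh (wd []) x = x := by
  induction hx using Submodule.span_induction with
  | mem z hz =>
      obtain ⟨v, c, rfl⟩ := hz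
      rw [halfSh_wd, hsW_nil_left]
  | zero => rw [map_zero]
  | add a b _ _ ha hb => rw [map_add, ha, hb]
  | smul r a _ ha => rw [map_smul, ha]

-- SHD for second argument in Pos
lemma shuffle_eq_halfSh_pos (x : Ten d) {y : Ten d} (hy : y ∈ (Pos : Submodule ℝ (Ten d))) :
    shuffle x y = halfSh x y + halfSh y x := by
  induction hy using Submodule.span_induction with
  | mem z hz =>
      obtain ⟨v, c, rfl⟩ := hz
      exact shuffle_eq_halfSh x (v ++ [c]) (by simp)
  | zero => simp
  | add a b _ _ ha hb =>
      rw [map_add, ha, hb, map_add, map_add, LinearMap.add_apply]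
      abel
  | smul r a _ ha =>
      rw [map_smul, ha, map_smul, map_smul, LinearMap.smul_apply, smul_add]

-- derived Zinbiel-type law
lemma halfSh_halfSh {x y : Ten d} (hy : y ∈ (Pos : Submodule ℝ (Ten d))) (z : Ten d) :
    halfSh (halfSh x y) z = halfSh x (halfSh y z) - halfSh (halfSh y x) z := by
  have h := zinbiel x y z
  rw [shuffle_eq_halfSh_pos x hy, map_add, LinearMap.add_apply] at h
  rw [← h]
  abel

-- ### the (right) Dynkin-type family ρ̃, defined by its half-shuffle recursion
def rhoT : Word d → Ten d
  | u => wd u - ∑ k ∈ (Finset.range (u.length - 1)).attach,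
      halfSh (wd (u.drop (k.1 + 1))) (rhoT (u.take (k.1 + 1)))
termination_by u => u.length
decreasing_by
  have hk := Finset.mem_range.mp k.2
  show (List.take (k.1 + 1) u).length < List.length u
  simp only [List.length_take]
  omega

lemma rhoT_def (u : Word d) : rhoT u = wd u -
    ∑ k ∈ Finset.range (u.length - 1), halfSh (wd (u.drop (k + 1))) (rhoT (u.take (k + 1))) := by
  rw [rhoT.eq_def]
  show wd u - ∑ k ∈ (Finset.range (u.length - 1)).attach,
      halfSh (wd (u.drop (k.1 + 1))) (rhoT (u.take (k.1 + 1))) = _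
  congr 1
  exact Finset.sum_attach (Finset.range (u.length - 1))
    (fun k => halfSh (wd (u.drop (k + 1))) (rhoT (u.take (k + 1))))

lemma rhoT_single (c : Fin d) : rhoT [c] = wd [c] := by
  rw [rhoT_def]; simp

lemma rhoT_mem_pos (u : Word d) (hu : u ≠ []) : rhoT u ∈ (Pos : Submodule ℝ (Ten d)) := by
  rw [rhoT_def]
  refine Submodule.sub_mem _ ?_ (Submodule.sum_mem _ fun k _ => halfSh_mem_pos _ _)
  rcases List.eq_nil_or_concat u with rfl | ⟨v, c, rfl⟩
  · exact absurd rfl hu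
  · simp only [List.concat_eq_append]; exact wd_mem_pos v c

lemma def_strict (u : Word d) :
    ∑ k ∈ Finset.range (u.length - 1), halfSh (wd (u.drop (k + 1))) (rhoT (u.take (k + 1)))
      = wd u - rhoT u := by
  rw [rhoT_def]; abel

lemma def_full (u : Word d) (hu : u ≠ []) :
    ∑ k ∈ Finset.range u.length, halfSh (wd (u.drop (k + 1))) (rhoT (u.take (k + 1)))
      = wd u := by
  obtain ⟨m, hm⟩ : ∃ m, u.length = m + 1 := by
    cases u with
    | nil => exact absurd rfl hu
    | cons a t => exact ⟨t.length, rfl⟩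
  rw [hm, Finset.sum_range_succ]
  have h1 : u.drop (m + 1) = [] := by rw [← hm, List.drop_length]
  have h2 : u.take (m + 1) = u := by rw [← hm, List.take_length]
  rw [h1, h2, halfSh_empty_left (rhoT_mem_pos u hu)]
  have := def_strict u
  rw [hm] at this
  simp only [Nat.add_sub_cancel] at this
  rw [this]
  abel

lemma L2 (u : Word d) :
    ∑ k ∈ Finset.range u.length, shuffle (rhoT (u.take (k + 1))) (wd (u.drop (k + 1)))
      = (u.length : ℝ) • wd u := by
  induction u using List.reverseRecOn with
  | nil => simp
  | append_singleton v c IH =>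
    have hlen : (v ++ [c]).length = v.length + 1 := by simp
    rw [hlen, Finset.sum_range_succ]
    have h1 : (v ++ [c]).drop (v.length + 1) = [] := by
      rw [← hlen, List.drop_length]
    have h2 : (v ++ [c]).take (v.length + 1) = v ++ [c] := by
      rw [← hlen, List.take_length]
    rw [h1, h2, shuffle_nil_right]
    have hterm : ∀ k ∈ Finset.range v.length,
        shuffle (rhoT ((v ++ [c]).take (k + 1))) (wd ((v ++ [c]).drop (k + 1)))
          = appL c (shuffle (rhoT (v.take (k + 1))) (wd (v.drop (k + 1))))
            + halfSh (wd ((v ++ [c]).drop (k + 1))) (rhoT ((v ++ [c]).take (k + 1))) := by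
      intro k hk
      have hk' : k + 1 ≤ v.length := Finset.mem_range.mp hk
      have ht : (v ++ [c]).take (k + 1) = v.take (k + 1) :=
        List.take_append_of_le_length hk'
      have hd : (v ++ [c]).drop (k + 1) = v.drop (k + 1) ++ [c] :=
        List.drop_append_of_le_length hk'
      rw [ht, hd, ← appL_wd, shuffle_appL]
    rw [Finset.sum_congr rfl hterm, Finset.sum_add_distrib, ← map_sum, IH]
    have hstrict : ∑ k ∈ Finset.range v.length,
        halfSh (wd ((v ++ [c]).drop (k + 1))) (rhoT ((v ++ [c]).take (k + 1)))
          = wd (v ++ [c]) - rhoT (v ++ [c]) := by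
      have := def_strict (v ++ [c])
      rwa [hlen, Nat.add_sub_cancel] at this
    rw [hstrict, map_smul, appL_wd]
    push_cast
    rw [add_smul, one_smul]
    abel

lemma SID (u : Word d) (hu : u ≠ []) :
    ∑ k ∈ Finset.range (u.length - 1), halfSh (rhoT (u.take (k + 1))) (wd (u.drop (k + 1)))
      = ((u.length - 1 : ℕ) : ℝ) • wd u := by
  obtain ⟨m, hm⟩ : ∃ m, u.length = m + 1 := by
    cases u with
    | nil => exact absurd rfl hu
    | cons a t => exact ⟨t.length, rfl⟩
  have hterm : ∀ k ∈ Finset.range (u.length - 1),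
      halfSh (rhoT (u.take (k + 1))) (wd (u.drop (k + 1)))
        = shuffle (rhoT (u.take (k + 1))) (wd (u.drop (k + 1)))
          - halfSh (wd (u.drop (k + 1))) (rhoT (u.take (k + 1))) := by
    intro k hk
    have hk' : k + 1 < u.length := by have := Finset.mem_range.mp hk; omega
    have hne : u.drop (k + 1) ≠ [] := by
      intro h
      have h2 : (u.drop (k + 1)).length = 0 := by rw [h]; rfl
      rw [List.length_drop] at h2
      omega
    rw [shuffle_eq_halfSh _ _ hne]
    abel
  have hsplit : ∑ k ∈ Finset.range u.length,
      shuffle (rhoT (u.take (k + 1))) (wd (u.drop (k + 1)))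
        = (∑ k ∈ Finset.range (u.length - 1),
            shuffle (rhoT (u.take (k + 1))) (wd (u.drop (k + 1)))) + rhoT u := by
    rw [hm, Nat.add_sub_cancel, Finset.sum_range_succ]
    have h1 : u.drop (m + 1) = [] := by rw [← hm, List.drop_length]
    have h2 : u.take (m + 1) = u := by rw [← hm, List.take_length]
    rw [h1, h2, shuffle_nil_right]
  have hL2 := L2 u
  rw [hsplit] at hL2
  rw [Finset.sum_congr rfl hterm, Finset.sum_sub_distrib, def_strict,
    eq_sub_of_add_eq hL2, hm, Nat.add_sub_cancel]
  push_cast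
  rw [add_smul, one_smul]
  abel

lemma gdef (x : Ten d) (u : Word d) (hu : u ≠ []) :
    ∑ k ∈ Finset.range u.length,
        halfSh (shuffle x (wd (u.drop (k + 1)))) (rhoT (u.take (k + 1)))
      = halfSh x (wd u) := by
  have hterm : ∀ k ∈ Finset.range u.length,
      halfSh (shuffle x (wd (u.drop (k + 1)))) (rhoT (u.take (k + 1)))
        = halfSh x (halfSh (wd (u.drop (k + 1))) (rhoT (u.take (k + 1)))) := by
    intro k _
    rw [zinbiel]
  rw [Finset.sum_congr rfl hterm, ← map_sum, def_full u hu]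

-- triangular double sum reindexing
lemma sum_tri {M : Type*} [AddCommMonoid M] (N : ℕ) (f : ℕ → ℕ → M) :
    ∑ k ∈ Finset.range N, ∑ m ∈ Finset.range k, f m k
      = ∑ m ∈ Finset.range N, ∑ k ∈ Finset.Ico (m + 1) N, f m k := by
  induction N with
  | zero => simp
  | succ N IH =>
    rw [Finset.sum_range_succ, IH, Finset.sum_range_succ]
    have h1 : ∀ m ∈ Finset.range N, ∑ k ∈ Finset.Ico (m + 1) (N + 1), f m k
        = (∑ k ∈ Finset.Ico (m + 1) N, f m k) + f m N := by
      intro m hm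
      have hmN := Finset.mem_range.mp hm
      rw [Finset.sum_Ico_succ_top (by omega : m + 1 ≤ N)]
    rw [Finset.sum_congr rfl h1, Finset.sum_add_distrib]
    have h2 : Finset.Ico (N + 1) (N + 1) = ∅ := by simp
    rw [h2, Finset.sum_empty, add_zero]

def Qs (u : Word d) : Ten d :=
  ∑ k ∈ Finset.range (u.length - 1), halfSh (rhoT (u.take (k + 1))) (rhoT (u.drop (k + 1)))

def Ps (u : Word d) : Ten d :=
  ∑ k ∈ Finset.range (u.length - 1), halfSh (rhoT (u.drop (k + 1))) (rhoT (u.take (k + 1)))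

lemma E2 (u : Word d) (hu : u ≠ []) :
    ∑ k ∈ Finset.range (u.length - 1), halfSh (wd (u.drop (k + 1))) (Qs (u.take (k + 1)))
      = ((u.length - 1 : ℕ) : ℝ) • wd u - Qs u := by
  set n := u.length with hn
  have hn1 : 1 ≤ n := by
    rcases u with _ | ⟨a, t⟩
    · exact absurd rfl hu
    · simp [hn]
  -- rewrite each term as a double sum
  have hterm : ∀ k ∈ Finset.range (n - 1),
      halfSh (wd (u.drop (k + 1))) (Qs (u.take (k + 1)))
        = ∑ m ∈ Finset.range k,
            halfSh (shuffle (rhoT (u.take (m + 1))) (wd (u.drop (k + 1))))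
              (rhoT ((u.take (k + 1)).drop (m + 1))) := by
    intro k hk
    have hk' : k + 1 ≤ n - 1 := Finset.mem_range.mp hk
    have hlen : (u.take (k + 1)).length = k + 1 := by
      rw [List.length_take]; omega
    rw [Qs, hlen, Nat.add_sub_cancel, map_sum]
    refine Finset.sum_congr rfl fun m hm => ?_
    have hm' : m < k := Finset.mem_range.mp hm
    have htt : (u.take (k + 1)).take (m + 1) = u.take (m + 1) := by
      rw [List.take_take]; congr 1; omega
    rw [htt, ← zinbiel, shuffle_comm]
  rw [Finset.sum_congr rfl hterm, sum_tri]
  -- inner sums via GDEF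
  have hinner : ∀ m ∈ Finset.range (n - 1),
      ∑ k ∈ Finset.Ico (m + 1) (n - 1),
          halfSh (shuffle (rhoT (u.take (m + 1))) (wd (u.drop (k + 1))))
            (rhoT ((u.take (k + 1)).drop (m + 1)))
        = halfSh (rhoT (u.take (m + 1))) (wd (u.drop (m + 1)))
          - halfSh (rhoT (u.take (m + 1))) (rhoT (u.drop (m + 1))) := by
    intro m hm
    have hm' : m + 1 ≤ n - 1 := Finset.mem_range.mp hm
    set x := rhoT (u.take (m + 1)) with hx
    set z := u.drop (m + 1) with hz
    have hzlen : z.length = n - (m + 1) := by rw [hz, List.length_drop]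
    have hzne : z ≠ [] := by
      intro h
      rw [h] at hzlen
      simp only [List.length_nil] at hzlen
      omega
    have hre : ∀ j, u.drop (m + 1 + j + 1) = z.drop (j + 1) := by
      intro j
      rw [hz, List.drop_drop]
      congr 1 <;> omega
    have hre2 : ∀ j, (u.take (m + 1 + j + 1)).drop (m + 1) = z.take (j + 1) := by
      intro j
      rw [hz, List.drop_take]
      congr 1 <;> omega
    rw [Finset.sum_Ico_eq_sum_range]
    have hcong : ∀ j ∈ Finset.range (n - 1 - (m + 1)),
        halfSh (shuffle x (wd (u.drop (m + 1 + j + 1))))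
            (rhoT ((u.take (m + 1 + j + 1)).drop (m + 1)))
          = halfSh (shuffle x (wd (z.drop (j + 1)))) (rhoT (z.take (j + 1))) := by
      intro j _
      rw [hre j, hre2 j]
    rw [Finset.sum_congr rfl hcong]
    have hgdef := gdef x z hzne
    have hzlen1 : z.length = (n - 1 - (m + 1)) + 1 := by omega
    rw [hzlen1, Finset.sum_range_succ] at hgdef
    have hlast : z.drop ((n - 1 - (m + 1)) + 1) = [] := by
      rw [← hzlen1, List.drop_length]
    have hlast2 : z.take ((n - 1 - (m + 1)) + 1) = z := by
      rw [← hzlen1, List.take_length]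
    rw [hlast, hlast2, shuffle_nil_right] at hgdef
    rw [eq_sub_of_add_eq hgdef]
  rw [Finset.sum_congr rfl hinner, Finset.sum_sub_distrib, SID u hu, ← Qs]

-- linearity in the first slot of halfSh
lemma halfSh_sub_left (a b c : Ten d) : halfSh (a - b) c = halfSh a c - halfSh b c := by
  rw [map_sub]; rfl

lemma halfSh_smul_left (r : ℝ) (a c : Ten d) : halfSh (r • a) c = r • halfSh a c := by
  rw [map_smul]; rfl

lemma halfSh_sum_left {ι : Type*} (s : Finset ι) (f : ι → Ten d) (c : Ten d) :
    halfSh (∑ i ∈ s, f i) c = ∑ i ∈ s, halfSh (f i) c := by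
  rw [map_sum, LinearMap.sum_apply]

lemma take_ne_nil {u : Word d} (hu : u ≠ []) (j : ℕ) : u.take (j + 1) ≠ [] := by
  intro h
  rcases u with _ | ⟨a, t⟩
  · exact hu rfl
  · simp [List.take] at h

lemma drop_ne_nil {u : Word d} {k : ℕ} (h : k < u.length) : u.drop k ≠ [] := by
  intro hh
  have h2 : (u.drop k).length = 0 := by rw [hh]; rfl
  rw [List.length_drop] at h2
  omega

theorem rid (u : Word d) (hu : u ≠ []) :
    Qs u - Ps u = ((u.length - 1 : ℕ) : ℝ) • rhoT u := by
  suffices H : ∀ N (u : Word d), u.length ≤ N → u ≠ [] →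
      Qs u - Ps u = ((u.length - 1 : ℕ) : ℝ) • rhoT u from H u.length u le_rfl hu
  intro N
  induction N with
  | zero => intro u hN hu; exact absurd (List.length_eq_zero_iff.mp (Nat.le_zero.mp hN)) hu
  | succ N IH =>
    intro u hN hu
    set n := u.length with hn
    have hn1 : 1 ≤ n := by rw [hn]; exact List.length_pos_iff.mpr hu
    by_cases hn2 : n < 2
    · -- single letter: everything trivial
      have h1 : n = 1 := by omega
      rw [Qs, Ps, ← hn, h1]
      simp
    push_neg at hn2
    -- abbreviations
    have hAd : ∀ k : ℕ, (u.drop (k + 1)).length - 1 = n - k - 2 := by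
      intro k; rw [List.length_drop]; omega
    have hAt : ∀ t : ℕ, t + 1 ≤ n → (u.take (t + 1)).length - 1 = t := by
      intro t ht; rw [List.length_take]; omega
    -- Step A/B: expand Ps
    have hA : ∀ k ∈ Finset.range (n - 1),
        halfSh (rhoT (u.drop (k + 1))) (rhoT (u.take (k + 1)))
          = halfSh (wd (u.drop (k + 1))) (rhoT (u.take (k + 1)))
            - ((∑ j ∈ Finset.range (n - k - 2),
                halfSh (wd ((u.drop (k + 1)).drop (j + 1)))
                  (halfSh (rhoT ((u.drop (k + 1)).take (j + 1))) (rhoT (u.take (k + 1)))))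
              - (∑ j ∈ Finset.range (n - k - 2),
                halfSh (halfSh (rhoT ((u.drop (k + 1)).take (j + 1)))
                    (wd ((u.drop (k + 1)).drop (j + 1)))) (rhoT (u.take (k + 1))))) := by
      intro k hk
      have hk' : k + 1 ≤ n - 1 := Finset.mem_range.mp hk
      have hdk : u.drop (k + 1) ≠ [] := drop_ne_nil (by omega)
      rw [show rhoT (u.drop (k + 1)) = wd (u.drop (k + 1)) -
          ∑ j ∈ Finset.range (n - k - 2),
            halfSh (wd ((u.drop (k + 1)).drop (j + 1))) (rhoT ((u.drop (k + 1)).take (j + 1)))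
        from by rw [rhoT_def (u.drop (k + 1)), hAd k]]
      rw [halfSh_sub_left, halfSh_sum_left]
      congr 1
      rw [← Finset.sum_sub_distrib]
      refine Finset.sum_congr rfl fun j hj => ?_
      have hB : rhoT ((u.drop (k + 1)).take (j + 1)) ∈ (Pos : Submodule ℝ (Ten d)) :=
        rhoT_mem_pos _ (take_ne_nil hdk j)
      rw [halfSh_halfSh hB]
    have hPs : Ps u = (wd u - rhoT u)
        - ((∑ k ∈ Finset.range (n - 1), ∑ j ∈ Finset.range (n - k - 2),
            halfSh (wd ((u.drop (k + 1)).drop (j + 1)))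
              (halfSh (rhoT ((u.drop (k + 1)).take (j + 1))) (rhoT (u.take (k + 1)))))
          - (∑ k ∈ Finset.range (n - 1), ∑ j ∈ Finset.range (n - k - 2),
            halfSh (halfSh (rhoT ((u.drop (k + 1)).take (j + 1)))
                (wd ((u.drop (k + 1)).drop (j + 1)))) (rhoT (u.take (k + 1))))) := by
      rw [Ps, ← hn, Finset.sum_congr rfl hA, Finset.sum_sub_distrib, def_strict,
        Finset.sum_sub_distrib]
    -- Step C: W₂ via SID on the suffixes
    have hW2 : ∑ k ∈ Finset.range (n - 1), ∑ j ∈ Finset.range (n - k - 2),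
        halfSh (halfSh (rhoT ((u.drop (k + 1)).take (j + 1)))
            (wd ((u.drop (k + 1)).drop (j + 1)))) (rhoT (u.take (k + 1)))
          = ∑ k ∈ Finset.range (n - 1),
              ((n - k - 2 : ℕ) : ℝ) • halfSh (wd (u.drop (k + 1))) (rhoT (u.take (k + 1))) := by
      refine Finset.sum_congr rfl fun k hk => ?_
      have hk' : k + 1 ≤ n - 1 := Finset.mem_range.mp hk
      have hdk : u.drop (k + 1) ≠ [] := drop_ne_nil (by omega)
      rw [← halfSh_sum_left]
      have hsid := SID (u.drop (k + 1)) hdk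
      rw [hAd k] at hsid
      rw [hsid, halfSh_smul_left]
    -- Step D: reindex W₁
    have hW1 : ∑ t ∈ Finset.range (n - 1), halfSh (wd (u.drop (t + 1))) (Ps (u.take (t + 1)))
        = ∑ k ∈ Finset.range (n - 1), ∑ j ∈ Finset.range (n - k - 2),
            halfSh (wd ((u.drop (k + 1)).drop (j + 1)))
              (halfSh (rhoT ((u.drop (k + 1)).take (j + 1))) (rhoT (u.take (k + 1)))) := by
      have hRHSterm : ∀ t ∈ Finset.range (n - 1),
          halfSh (wd (u.drop (t + 1))) (Ps (u.take (t + 1)))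
            = ∑ k ∈ Finset.range t, halfSh (wd (u.drop (t + 1)))
                (halfSh (rhoT ((u.take (t + 1)).drop (k + 1))) (rhoT (u.take (k + 1)))) := by
        intro t ht
        have ht' : t + 1 ≤ n - 1 := Finset.mem_range.mp ht
        rw [Ps, hAt t (by omega), map_sum]
        refine Finset.sum_congr rfl fun k hk => ?_
        have hk' : k < t := Finset.mem_range.mp hk
        have h1 : (u.take (t + 1)).take (k + 1) = u.take (k + 1) := by
          rw [List.take_take]
          congr 1
          omega
        rw [h1]
      rw [Finset.sum_congr rfl hRHSterm, sum_tri]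
      refine Finset.sum_congr rfl fun k hk => ?_
      have hk' : k + 1 ≤ n - 1 := Finset.mem_range.mp hk
      rw [Finset.sum_Ico_eq_sum_range]
      rw [show n - 1 - (k + 1) = n - k - 2 from by omega]
      refine Finset.sum_congr rfl fun j hj => ?_
      have hd1 : u.drop (k + 1 + j + 1) = (u.drop (k + 1)).drop (j + 1) := by
        rw [List.drop_drop]
        congr 1 <;> omega
      have hd2 : (u.take (k + 1 + j + 1)).drop (k + 1) = (u.drop (k + 1)).take (j + 1) := by
        rw [List.drop_take]
        congr 1 <;> omega
      rw [hd1, hd2]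
    -- Step E: the inductive hypothesis on prefixes
    have hIH : ∀ t ∈ Finset.range (n - 1),
        Ps (u.take (t + 1)) = Qs (u.take (t + 1)) - ((t : ℕ) : ℝ) • rhoT (u.take (t + 1)) := by
      intro t ht
      have ht' : t + 1 ≤ n - 1 := Finset.mem_range.mp ht
      have hlen : (u.take (t + 1)).length ≤ N := by
        rw [List.length_take]; omega
      have hih := IH (u.take (t + 1)) hlen (take_ne_nil hu t)
      rw [hAt t (by omega)] at hih
      rw [← hih]
      abel
    have hW1' : ∑ t ∈ Finset.range (n - 1), halfSh (wd (u.drop (t + 1))) (Ps (u.take (t + 1)))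
        = (((n - 1 : ℕ) : ℝ) • wd u - Qs u)
          - ∑ t ∈ Finset.range (n - 1),
              ((t : ℕ) : ℝ) • halfSh (wd (u.drop (t + 1))) (rhoT (u.take (t + 1))) := by
      have hterm : ∀ t ∈ Finset.range (n - 1),
          halfSh (wd (u.drop (t + 1))) (Ps (u.take (t + 1)))
            = halfSh (wd (u.drop (t + 1))) (Qs (u.take (t + 1)))
              - ((t : ℕ) : ℝ) • halfSh (wd (u.drop (t + 1))) (rhoT (u.take (t + 1))) := by
        intro t ht
        rw [hIH t ht, map_sub, map_smul]
      rw [Finset.sum_congr rfl hterm, Finset.sum_sub_distrib, E2 u hu]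
    -- merge the two weighted sums
    have hmerge : (∑ k ∈ Finset.range (n - 1),
          ((n - k - 2 : ℕ) : ℝ) • halfSh (wd (u.drop (k + 1))) (rhoT (u.take (k + 1))))
        + ∑ t ∈ Finset.range (n - 1),
            ((t : ℕ) : ℝ) • halfSh (wd (u.drop (t + 1))) (rhoT (u.take (t + 1)))
          = ((n - 2 : ℕ) : ℝ) • (wd u - rhoT u) := by
      rw [← Finset.sum_add_distrib]
      have hterm : ∀ k ∈ Finset.range (n - 1),
          ((n - k - 2 : ℕ) : ℝ) • halfSh (wd (u.drop (k + 1))) (rhoT (u.take (k + 1)))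
            + ((k : ℕ) : ℝ) • halfSh (wd (u.drop (k + 1))) (rhoT (u.take (k + 1)))
            = ((n - 2 : ℕ) : ℝ) • halfSh (wd (u.drop (k + 1))) (rhoT (u.take (k + 1))) := by
        intro k hk
        have hk' := Finset.mem_range.mp hk
        rw [← add_smul, ← Nat.cast_add,
          show n - k - 2 + k = n - 2 from by omega]
      rw [Finset.sum_congr rfl hterm, ← Finset.smul_sum, def_strict]
    -- final assembly
    rw [hPs, hW2, ← hW1, hW1']
    rw [show (∑ k ∈ Finset.range (n - 1),
          ((n - k - 2 : ℕ) : ℝ) • halfSh (wd (u.drop (k + 1))) (rhoT (u.take (k + 1))))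
        = ((n - 2 : ℕ) : ℝ) • (wd u - rhoT u)
          - ∑ t ∈ Finset.range (n - 1),
              ((t : ℕ) : ℝ) • halfSh (wd (u.drop (t + 1))) (rhoT (u.take (t + 1)))
      from by rw [← hmerge]; abel]
    have hc1 : ((n - 1 : ℕ) : ℝ) = (n : ℝ) - 1 := by
      rw [Nat.cast_sub hn1]; norm_num
    have hc2 : ((n - 2 : ℕ) : ℝ) = (n : ℝ) - 2 := by
      rw [Nat.cast_sub hn2]; norm_num
    rw [hc1, hc2]
    module

-- membership lemmas for areaCl
lemma wd_letter_mem_areaCl (i : Fin d) : wd [i] ∈ areaCl d :=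
  Submodule.mem_sInf.mpr fun _ hp => hp.1 i

lemma areaOp_mem_areaCl {x y : Ten d} (hx : x ∈ areaCl d) (hy : y ∈ areaCl d) :
    areaOp x y ∈ areaCl d :=
  Submodule.mem_sInf.mpr fun p hp =>
    hp.2 x (Submodule.mem_sInf.mp hx p hp) y (Submodule.mem_sInf.mp hy p hp)

lemma rhoT_mem_areaCl (u : Word d) (hu : u ≠ []) : rhoT u ∈ areaCl d := by
  suffices H : ∀ N (u : Word d), u.length ≤ N → u ≠ [] → rhoT u ∈ areaCl d from
    H u.length u le_rfl hu
  intro N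
  induction N with
  | zero => intro u hN hu; exact absurd (List.length_eq_zero_iff.mp (Nat.le_zero.mp hN)) hu
  | succ N IH =>
    intro u hN hu
    have hn1 : 1 ≤ u.length := List.length_pos_iff.mpr hu
    by_cases hn2 : u.length < 2
    · obtain ⟨a, rfl⟩ := List.length_eq_one_iff.mp (by omega : u.length = 1)
      rw [rhoT_single]
      exact wd_letter_mem_areaCl a
    push_neg at hn2
    have hne : ((u.length - 1 : ℕ) : ℝ) ≠ 0 := by
      rw [Nat.cast_ne_zero]; omega
    have hrho : rhoT u = ((u.length - 1 : ℕ) : ℝ)⁻¹ • (Qs u - Ps u) := by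
      rw [rid u hu, smul_smul, inv_mul_cancel₀ hne, one_smul]
    rw [hrho]
    refine Submodule.smul_mem _ _ ?_
    rw [Qs, Ps, ← Finset.sum_sub_distrib]
    refine Submodule.sum_mem _ fun k hk => ?_
    have hk' : k + 1 ≤ u.length - 1 := Finset.mem_range.mp hk
    have h1 : rhoT (u.take (k + 1)) ∈ areaCl d := by
      refine IH _ ?_ (take_ne_nil hu k)
      rw [List.length_take]; omega
    have h2 : rhoT (u.drop (k + 1)) ∈ areaCl d := by
      refine IH _ ?_ (drop_ne_nil (by omega))
      rw [List.length_drop]; omega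
    exact areaOp_mem_areaCl h1 h2

/-- **Areas of areas generate the shuffle algebra.**
The smallest unital ⧢-subalgebra of `T(ℝ^d)` containing the set `𝒜` of iterated areas of
letters is all of `T(ℝ^d)`. -/
theorem areas_generate_shuffle_algebra (d : ℕ) (hd : 1 ≤ d) :
    ShuffleGen ((areaCl d : Submodule ℝ (Ten d)) : Set (Ten d)) := by
  intro p hunit hsub hcl z
  have hw : ∀ N (w : Word d), w.length ≤ N → wd w ∈ p := by
    intro N
    induction N with
    | zero => intro w hN; rw [List.length_eq_zero_iff.mp (Nat.le_zero.mp hN)]; exact hunit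
    | succ N IH =>
      intro w hN
      by_cases hw0 : w = []
      · rw [hw0]; exact hunit
      have hn1 : 1 ≤ w.length := List.length_pos_iff.mpr hw0
      have hne : (w.length : ℝ) ≠ 0 := Nat.cast_ne_zero.mpr (by omega)
      have hwd : wd w = (w.length : ℝ)⁻¹ • ∑ k ∈ Finset.range w.length,
          shuffle (rhoT (w.take (k + 1))) (wd (w.drop (k + 1))) := by
        rw [L2 w, smul_smul, inv_mul_cancel₀ hne, one_smul]
      rw [hwd]
      refine Submodule.smul_mem _ _ (Submodule.sum_mem _ fun k hk => ?_)
      have h1 : rhoT (w.take (k + 1)) ∈ areaCl d := rhoT_mem_areaCl _ (take_ne_nil hw0 k)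
      have h2 : wd (w.drop (k + 1)) ∈ p := by
        refine IH _ ?_
        rw [List.length_drop]
        have := Finset.mem_range.mp hk
        omega
      exact hcl _ (hsub h1) _ h2
  have hz : z = ∑ w ∈ z.support, z w • wd w := by
    conv_lhs => rw [← Finsupp.sum_single z]
    rw [Finsupp.sum]
    refine Finset.sum_congr rfl fun w _ => ?_
    simp [wd, Finsupp.smul_single]
  rw [hz]
  exact Submodule.sum_mem _ fun w _ => Submodule.smul_mem _ _ (hw w.length w le_rfl)

end
end

section
/- For every nonempty word w one has w = Σ (1/k_{|w₁|,…,|w_n|}) ρ(w₁) ⧢ ⋯ ⧢ ρ(w_n), where the sum runs over all n ≥ 1 and all factorizations w = w₁⋯w_n of w into a concatenation of nonempty words, and where the coefficients are defined recursively by k_m = m and k_{m₁,…,m_n} = (m₁+⋯+m_n)·k_{m₂,…,m_n}. In particular, any linear spanning set of the image of ρ generates the shuffle algebra. -/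
open scoped TensorProduct

set_option maxSynthPendingDepth 3

noncomputable section

variable {d : ℕ}

/-- Coefficients `k_{m₁,…,m_n}`: `k_m = m`, `k_{m₁,…,m_n} = (m₁+⋯+m_n)·k_{m₂,…,m_n}`. -/
def kcoef : List ℕ → ℝ
  | [] => 1
  | m :: ms => ((m :: ms).sum : ℝ) * kcoef ms

/-- Shuffle product of a list of tensors (right-nested). -/
def shProd : List (Ten d) → Ten d
  | [] => wd []
  | [x] => x
  | x :: y :: ys => shuffle x (shProd (y :: ys))


namespace Aux
variable {d : ℕ}

def Mc (p : Word d) : Ten d →ₗ[ℝ] Ten d := Finsupp.lmapDomain ℝ ℝ (fun w => p ++ w)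
def Ec (p : Word d) : Ten d →ₗ[ℝ] Ten d := Finsupp.lmapDomain ℝ ℝ (fun w => w ++ p)

@[simp] lemma Mc_wd (p w : Word d) : Mc p (wd w) = wd (p ++ w) := by
  simp [Mc, wd, Finsupp.lmapDomain_apply, Finsupp.mapDomain_single]

@[simp] lemma Ec_wd (p w : Word d) : Ec p (wd w) = wd (w ++ p) := by
  simp [Ec, wd, Finsupp.lmapDomain_apply, Finsupp.mapDomain_single]

lemma lift2_wd (f : Word d → Word d → Ten d) (u v : Word d) :
    lift2 f (wd u) (wd v) = f u v := by
  simp [lift2, wd, Finsupp.lsum_single, LinearMap.toSpanSingleton_apply]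

@[simp] lemma shuffle_wd (u v : Word d) : shuffle (wd u) (wd v) = shW u v := lift2_wd _ u v

@[simp] lemma concM_wd (u v : Word d) : concM (wd u) (wd v) = wd (u ++ v) := lift2_wd _ u v

lemma linext {f g : Ten d →ₗ[ℝ] Ten d} (h : ∀ w, f (wd w) = g (wd w)) : f = g := by
  apply Finsupp.lhom_ext'
  intro w
  apply LinearMap.ext_ring
  simpa [wd] using h w

lemma EcMc (p q : Word d) (x : Ten d) : Ec p (Mc q x) = Mc q (Ec p x) := by
  have : (Ec p).comp (Mc q) = (Mc q).comp (Ec p) := by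
    apply linext; intro w; simp [List.append_assoc]
  exact LinearMap.congr_fun this x

lemma shR_nil (v : Word d) : shR ([] : Word d) v = wd v.reverse := by rw [shR]

lemma shR_nil' (u : Word d) : shR u ([] : Word d) = wd u.reverse := by
  cases u with
  | nil => rw [shR]
  | cons a u => rw [shR]

lemma shR_cons (a b : Fin d) (u v : Word d) :
    shR (a :: u) (b :: v) = Ec [a] (shR u (b :: v)) + Ec [b] (shR (a :: u) v) := by
  rw [shR]; rfl

lemma shR_snoc : ∀ (n : ℕ) (p q : Word d) (a b : Fin d), p.length + q.length ≤ n →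
    shR (p ++ [a]) (q ++ [b]) = Mc [a] (shR p (q ++ [b])) + Mc [b] (shR (p ++ [a]) q) := by
  intro n
  induction n with
  | zero =>
    intro p q a b h
    have hp : p = [] := by cases p <;> simp_all
    have hq : q = [] := by cases q <;> simp_all
    subst hp; subst hq
    simp [shR_cons, shR_nil, shR_nil']
    abel
  | succ n ih =>
    intro p q a b h
    match p, q with
    | [], [] =>
      simp [shR_cons, shR_nil, shR_nil']
      abel
    | [], c :: q' =>
      have h1 := ih [] q' a b (by simp at h ⊢; omega)
      simp only [List.nil_append] at h1 ⊢
      rw [show ((c :: q') ++ [b] : Word d) = c :: (q' ++ [b]) by simp] at *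
      rw [shR_cons a c [] (q' ++ [b]), h1, shR_cons a c [] q']
      simp only [shR_nil, shR_nil', map_add, EcMc, Mc_wd, Ec_wd, List.reverse_cons,
        List.reverse_append, List.reverse_nil, List.nil_append, List.append_assoc,
        List.cons_append, List.singleton_append]
      abel
    | e :: p', [] =>
      have h1 := ih p' [] a b (by simp at h ⊢; omega)
      simp only [List.nil_append] at h1 ⊢
      rw [show ((e :: p') ++ [a] : Word d) = e :: (p' ++ [a]) by simp] at *
      rw [shR_cons e b (p' ++ [a]) [], h1, shR_cons e b p' []]
      simp only [shR_nil, shR_nil', map_add, EcMc, Mc_wd, Ec_wd, List.reverse_cons,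
        List.reverse_append, List.reverse_nil, List.nil_append, List.append_assoc,
        List.cons_append, List.singleton_append]
      abel
    | e :: p', c :: q' =>
      have h1 := ih p' (c :: q') a b (by simp at h ⊢; omega)
      have h2 := ih (e :: p') q' a b (by simp at h ⊢; omega)
      rw [show ((e :: p') ++ [a] : Word d) = e :: (p' ++ [a]) by simp,
        show ((c :: q') ++ [b] : Word d) = c :: (q' ++ [b]) by simp] at *
      rw [shR_cons e c (p' ++ [a]) (q' ++ [b]), h1, h2,
        shR_cons e c (p' ++ [a]) q', shR_cons e c p' (q' ++ [b])]
      simp only [map_add, EcMc]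
      abel

end Aux

namespace Aux
variable {d : ℕ}

lemma McMc (p q : Word d) (x : Ten d) : Mc p (Mc q x) = Mc (p ++ q) x := by
  have : (Mc p).comp (Mc q) = Mc (p ++ q : Word d) := by
    apply linext; intro w; simp [List.append_assoc]
  exact LinearMap.congr_fun this x

lemma EcEc (p q : Word d) (x : Ten d) : Ec p (Ec q x) = Ec (q ++ p) x := by
  have : (Ec p).comp (Ec q) = Ec (q ++ p : Word d) := by
    apply linext; intro w; simp [List.append_assoc]
  exact LinearMap.congr_fun this x

@[simp] lemma shW_nil_left (v : Word d) : shW ([] : Word d) v = wd v := by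
  simp [shW, shR_nil]

@[simp] lemma shW_nil_right (u : Word d) : shW u ([] : Word d) = wd u := by
  simp [shW, shR_nil']

lemma shW_snoc (a b : Fin d) (u v : Word d) :
    shW (u ++ [a]) (v ++ [b]) = Ec [a] (shW u (v ++ [b])) + Ec [b] (shW (u ++ [a]) v) := by
  simp only [shW, List.reverse_append, List.reverse_cons, List.reverse_nil, List.nil_append,
    List.singleton_append]
  rw [shR_cons]

lemma shW_cons (a b : Fin d) (u v : Word d) :
    shW (a :: u) (b :: v) = Mc [a] (shW u (b :: v)) + Mc [b] (shW (a :: u) v) := by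
  simp only [shW, List.reverse_cons]
  rw [shR_snoc (u.reverse.length + v.reverse.length) _ _ a b le_rfl]

lemma shW_Msplit (u : Word d) (b : Fin d) (q : Word d) :
    shW u (b :: q) = ∑ s ∈ Finset.range (u.length + 1),
      Mc (u.take s ++ [b]) (shW (u.drop s) q) := by
  induction u with
  | nil => simp
  | cons a u' ih =>
    rw [shW_cons, ih, map_sum]
    conv_rhs => rw [show (a :: u').length + 1 = u'.length + 1 + 1 from rfl, Finset.sum_range_succ']
    simp [McMc]

end Aux

namespace Aux
variable {d : ℕ}

lemma shW_Esplit (v : Word d) (p : Word d) (a : Fin d) :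
    shW (p ++ [a]) v = ∑ s ∈ Finset.range (v.length + 1),
      Ec (a :: v.drop s) (shW p (v.take s)) := by
  induction v using List.reverseRecOn with
  | nil => simp
  | append_singleton v' b ih =>
    rw [shW_snoc, ih, map_sum]
    conv_rhs => rw [show (v' ++ [b]).length + 1 = v'.length + 1 + 1 by simp, Finset.sum_range_succ]
    have h1 : ∀ s ∈ Finset.range (v'.length + 1),
        Ec [b] (Ec (a :: v'.drop s) (shW p (v'.take s))) =
        Ec (a :: (v' ++ [b]).drop s) (shW p ((v' ++ [b]).take s)) := by
      intro s hs
      simp only [Finset.mem_range] at hs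
      rw [EcEc, List.drop_append_of_le_length (by omega), List.take_append_of_le_length (by omega)]
      rfl
    rw [Finset.sum_congr rfl h1]
    have : (v' ++ [b]).take (v'.length + 1) = v' ++ [b] := by
      apply List.take_of_length_le; simp
    rw [this]
    have h2 : List.drop (v'.length + 1) (v' ++ [b]) = [] := by
      apply List.drop_eq_nil_of_le; simp
    rw [h2]
    abel
end Aux

namespace Aux
variable {d : ℕ}

lemma single_eq_smul_wd (w : Word d) (c : ℝ) : (Finsupp.single w c : Ten d) = c • wd w := by
  simp [wd, Finsupp.smul_single]

lemma shuffle_nil_right (x : Ten d) : shuffle x (wd []) = x := by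
  induction x using Finsupp.induction_linear with
  | zero => simp
  | add f g hf hg => simp [map_add, LinearMap.add_apply, hf, hg]
  | single w c => rw [single_eq_smul_wd]; simp

lemma shuffle_nil_left (x : Ten d) : shuffle (wd []) x = x := by
  induction x using Finsupp.induction_linear with
  | zero => simp
  | add f g hf hg => simp [map_add, hf, hg]
  | single w c => rw [single_eq_smul_wd]; simp

lemma shuffle_Ec_right (a c : Fin d) (t : Word d) (x : Ten d) :
    shuffle (Ec [a] x) (wd (t ++ [c])) =
      Ec [a] (shuffle x (wd (t ++ [c]))) + Ec [c] (shuffle (Ec [a] x) (wd t)) := by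
  induction x using Finsupp.induction_linear with
  | zero => simp
  | add f g hf hg =>
    simp only [map_add, LinearMap.add_apply, hf, hg]; abel
  | single w r =>
    rw [single_eq_smul_wd]
    simp only [map_smul, LinearMap.smul_apply, Ec_wd, shuffle_wd]
    rw [shW_snoc]
    simp [map_add]

lemma shuffle_Ec_left (a b : Fin d) (u : Word d) (y : Ten d) :
    shuffle (wd (u ++ [a])) (Ec [b] y) =
      Ec [a] (shuffle (wd u) (Ec [b] y)) + Ec [b] (shuffle (wd (u ++ [a])) y) := by
  induction y using Finsupp.induction_linear with
  | zero => simp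
  | add f g hf hg =>
    simp only [map_add, hf, hg]; abel
  | single w r =>
    rw [single_eq_smul_wd]
    simp only [map_smul, Ec_wd, shuffle_wd]
    rw [shW_snoc]
    simp [map_add]

lemma shuffle_assoc_wd : ∀ (n : ℕ) (u v t : Word d),
    u.length + v.length + t.length ≤ n →
    shuffle (shW u v) (wd t) = shuffle (wd u) (shW v t) := by
  intro n
  induction n with
  | zero =>
    intro u v t h
    have hu : u = [] := by cases u <;> simp_all
    have hv : v = [] := by cases v <;> simp_all
    have ht : t = [] := by cases t <;> simp_all
    subst hu; subst hv; subst ht; simp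
  | succ n ih =>
    intro u v t h
    rcases List.eq_nil_or_concat t with rfl | ⟨t', c, rfl⟩
    · rw [shuffle_nil_right, shW_nil_right, shuffle_wd]
    rcases List.eq_nil_or_concat u with rfl | ⟨u', a, rfl⟩
    · rw [shW_nil_left, shuffle_nil_left, shuffle_wd]
    rcases List.eq_nil_or_concat v with rfl | ⟨v', b, rfl⟩
    · rw [shW_nil_right, shW_nil_left, shuffle_wd]
    simp only [List.concat_eq_append] at h ⊢
    have i1 := ih u' (v' ++ [b]) (t' ++ [c]) (by simp at h ⊢; omega)
    have i2 := ih (u' ++ [a]) v' (t' ++ [c]) (by simp at h ⊢; omega)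
    have i3 := ih (u' ++ [a]) (v' ++ [b]) t' (by simp at h ⊢; omega)
    have e1 := shuffle_Ec_right a c t' (shW u' (v' ++ [b]))
    have e2 := shuffle_Ec_right b c t' (shW (u' ++ [a]) v')
    have e3 := shuffle_Ec_left a b u' (shW v' (t' ++ [c]))
    have e4 := shuffle_Ec_left a c u' (shW (v' ++ [b]) t')
    have hL := shW_snoc a b u' v'
    have hR := shW_snoc b c v' t'
    have hLHS : shuffle (shW (u' ++ [a]) (v' ++ [b])) (wd (t' ++ [c])) =
        Ec [a] (shuffle (wd u') (shW (v' ++ [b]) (t' ++ [c]))) +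
        Ec [b] (shuffle (wd (u' ++ [a])) (shW v' (t' ++ [c]))) +
        Ec [c] (shuffle (wd (u' ++ [a])) (shW (v' ++ [b]) t')) := by
      have hcomb : Ec [c] (shuffle (Ec [a] (shW u' (v' ++ [b]))) (wd t')) +
          Ec [c] (shuffle (Ec [b] (shW (u' ++ [a]) v')) (wd t')) =
          Ec [c] (shuffle (wd (u' ++ [a])) (shW (v' ++ [b]) t')) := by
        rw [← map_add, ← LinearMap.add_apply, ← map_add, ← hL, i3]
      conv_lhs => rw [hL]
      rw [map_add, LinearMap.add_apply, e1, e2, i1, i2, ← hcomb]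
      abel
    have hRHS : shuffle (wd (u' ++ [a])) (shW (v' ++ [b]) (t' ++ [c])) =
        Ec [a] (shuffle (wd u') (shW (v' ++ [b]) (t' ++ [c]))) +
        Ec [b] (shuffle (wd (u' ++ [a])) (shW v' (t' ++ [c]))) +
        Ec [c] (shuffle (wd (u' ++ [a])) (shW (v' ++ [b]) t')) := by
      have hcomb2 : Ec [a] (shuffle (wd u') (Ec [b] (shW v' (t' ++ [c])))) +
          Ec [a] (shuffle (wd u') (Ec [c] (shW (v' ++ [b]) t'))) =
          Ec [a] (shuffle (wd u') (shW (v' ++ [b]) (t' ++ [c]))) := by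
        rw [← map_add, ← map_add, ← hR]
      conv_lhs => rw [hR]
      rw [map_add, e3, e4, ← hcomb2]
      abel
    rw [hLHS, hRHS]
end Aux

namespace Aux
variable {d : ℕ}

lemma Aprime : ∀ (n : ℕ) (z : Word d), z.length ≤ n →
    ∑ t ∈ Finset.range (z.length + 1),
      ((-1 : ℝ) ^ (z.length - t)) • shW (z.take t) ((z.drop t).reverse)
      = if z = [] then wd ([] : Word d) else 0 := by
  intro n
  induction n with
  | zero =>
    intro z h
    have hz : z = [] := by cases z <;> simp_all
    subst hz; simp
  | succ n ih =>
    intro z hz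
    rcases List.eq_nil_or_concat z with rfl | ⟨y, b, rfl⟩
    · simp
    simp only [List.concat_eq_append] at hz ⊢
    have hyl : (y ++ [b]).length = y.length + 1 := by simp
    set m := y.length with hm
    have hne : (y ++ [b] : Word d) ≠ [] := by simp
    rw [if_neg hne, hyl]
    rw [Finset.sum_range_succ]
    have hlast : ((y ++ [b]).take (m + 1)) = y ++ [b] := by
      apply List.take_of_length_le; simp [hm]
    have hlast2 : ((y ++ [b]).drop (m + 1)) = [] := by
      apply List.drop_eq_nil_of_le; simp [hm]
    rw [hlast, hlast2]
    simp only [Nat.sub_self, pow_zero, one_smul, List.reverse_nil, shW_nil_right]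
    -- now handle the main sum
    have hmain : ∀ t ∈ Finset.range (m + 1),
        ((-1 : ℝ) ^ (m + 1 - t)) • shW ((y ++ [b]).take t) (((y ++ [b]).drop t).reverse)
        = ∑ s ∈ Finset.range (t + 1), ((-1 : ℝ) ^ (m + 1 - t)) •
            Mc (y.take s ++ [b]) (shW ((y.drop s).take (t - s)) (((y.drop s).drop (t - s)).reverse)) := by
      intro t ht
      simp only [Finset.mem_range] at ht
      have h1 : (y ++ [b]).take t = y.take t := List.take_append_of_le_length (by omega)
      have h2 : (y ++ [b]).drop t = y.drop t ++ [b] := List.drop_append_of_le_length (by omega)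
      rw [h1, h2, List.reverse_append, List.reverse_singleton, List.singleton_append]
      rw [shW_Msplit, List.length_take, min_eq_left (by omega), Finset.smul_sum]
      apply Finset.sum_congr rfl
      intro s hs
      simp only [Finset.mem_range] at hs
      have h3 : (y.drop s).drop (t - s) = y.drop t := by
        rw [List.drop_drop]; congr 1; omega
      rw [List.take_take, min_eq_left (by omega), List.drop_take, h3]
    rw [Finset.sum_congr rfl hmain]
    rw [Finset.sum_comm' (t' := Finset.range (m + 1)) (s' := fun s => Finset.Ico s (m + 1))
      (by intro t s; simp only [Finset.mem_range, Finset.mem_Ico]; omega)]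
    have hinner : ∀ s ∈ Finset.range (m + 1),
        (∑ t ∈ Finset.Ico s (m + 1), ((-1 : ℝ) ^ (m + 1 - t)) •
          Mc (y.take s ++ [b]) (shW ((y.drop s).take (t - s)) (((y.drop s).drop (t - s)).reverse)))
        = - Mc (y.take s ++ [b]) (if (y.drop s : Word d) = [] then wd ([] : Word d) else 0) := by
      intro s hs
      simp only [Finset.mem_range] at hs
      rw [Finset.sum_Ico_eq_sum_range]
      have hl : (y.drop s).length = m - s := by simp [hm]
      have hstep : ∀ k, s + k - s = k := by omega
      have hsign : ∀ k ∈ Finset.range (m + 1 - s),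
          ((-1 : ℝ) ^ (m + 1 - (s + k))) •
            Mc (y.take s ++ [b]) (shW ((y.drop s).take (s + k - s)) (((y.drop s).drop (s + k - s)).reverse))
          = - (Mc (y.take s ++ [b]) (((-1 : ℝ) ^ ((y.drop s).length - k)) •
              shW ((y.drop s).take k) (((y.drop s).drop k).reverse))) := by
        intro k hk
        simp only [Finset.mem_range] at hk
        rw [hstep, map_smul, hl]
        rw [show m + 1 - (s + k) = (m - s - k) + 1 by omega, pow_succ]
        simp [neg_smul]
      rw [Finset.sum_congr rfl hsign, Finset.sum_neg_distrib, ← map_sum]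
      congr 2
      rw [show m + 1 - s = (y.drop s).length + 1 by omega]
      exact ih _ (by simp [hm] at hz ⊢; omega)
    rw [Finset.sum_congr rfl hinner]
    have hsingle : ∑ s ∈ Finset.range (m + 1),
        -(Mc (y.take s ++ [b]) (if (y.drop s : Word d) = [] then wd ([] : Word d) else 0))
        = -(wd (y ++ [b] : Word d)) := by
      rw [Finset.sum_eq_single m]
      · rw [if_pos (by simp [hm]), show y.take m = y from List.take_of_length_le (by omega)]
        simp
      · intro s hs hsne
        simp only [Finset.mem_range] at hs
        rw [if_neg (by intro hc; apply hsne; have := congrArg List.length hc; simp [hm] at this; omega)]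
        simp
      · intro hc
        exact absurd (Finset.mem_range.2 (by omega)) hc
    rw [hsingle]
    abel
end Aux

namespace Aux
variable {d : ℕ}

lemma Alem : ∀ (n : ℕ) (w : Word d), w.length ≤ n →
    ∑ k ∈ Finset.range (w.length + 1), ((-1 : ℝ) ^ k) • shW ((w.take k).reverse) (w.drop k)
      = if w = [] then wd ([] : Word d) else 0 := by
  intro n
  induction n with
  | zero =>
    intro w h
    have hw : w = [] := by cases w <;> simp_all
    subst hw; simp
  | succ n ih =>
    intro w hw
    rcases w with _ | ⟨a, y⟩
    · simp
    simp only [List.length_cons] at hw ⊢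
    set m := y.length with hm
    rw [if_neg (by simp), Finset.sum_range_succ']
    simp only [pow_zero, one_smul, List.take_zero, List.reverse_nil, shW_nil_left, List.drop_zero]
    have hmain : ∀ t ∈ Finset.range (m + 1),
        ((-1 : ℝ) ^ (t + 1)) • shW (((a :: y).take (t + 1)).reverse) ((a :: y).drop (t + 1))
        = ∑ s ∈ Finset.range (m - t + 1), ((-1 : ℝ) ^ (t + 1)) •
            Ec (a :: y.drop (t + s)) (shW (((y.take (t + s)).take t).reverse) ((y.take (t + s)).drop t)) := by
      intro t ht
      simp only [Finset.mem_range] at ht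
      rw [List.take_succ_cons, List.drop_succ_cons, List.reverse_cons, shW_Esplit,
        Finset.smul_sum]
      rw [show (y.drop t).length = m - t by simp [hm]]
      apply Finset.sum_congr rfl
      intro s hs
      simp only [Finset.mem_range] at hs
      have e1 : List.drop s (List.drop t y) = List.drop (t + s) y := by
        rw [List.drop_drop, Nat.add_comm]
      have e2 : (y.take (t + s)).take t = y.take t := by
        rw [List.take_take, min_eq_left (by omega)]
      have e3 : (y.take (t + s)).drop t = List.take s (List.drop t y) := by
        rw [List.drop_take]; congr 1; omega
      rw [e1, e2, e3]
    rw [Finset.sum_congr rfl hmain]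
    have hico : ∀ t ∈ Finset.range (m + 1),
        (∑ s ∈ Finset.range (m - t + 1), ((-1 : ℝ) ^ (t + 1)) •
            Ec (a :: y.drop (t + s)) (shW (((y.take (t + s)).take t).reverse) ((y.take (t + s)).drop t)))
        = ∑ r ∈ Finset.Ico t (m + 1), ((-1 : ℝ) ^ (t + 1)) •
            Ec (a :: y.drop r) (shW (((y.take r).take t).reverse) ((y.take r).drop t)) := by
      intro t ht
      simp only [Finset.mem_range] at ht
      rw [Finset.sum_Ico_eq_sum_range, show m + 1 - t = m - t + 1 by omega]
    rw [Finset.sum_congr rfl hico]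
    rw [Finset.sum_comm' (t' := Finset.range (m + 1)) (s' := fun r => Finset.range (r + 1))
      (by intro t r; simp only [Finset.mem_range, Finset.mem_Ico]; omega)]
    have hinner : ∀ r ∈ Finset.range (m + 1),
        (∑ t ∈ Finset.range (r + 1), ((-1 : ℝ) ^ (t + 1)) •
            Ec (a :: y.drop r) (shW (((y.take r).take t).reverse) ((y.take r).drop t)))
        = - Ec (a :: y.drop r) (if (y.take r : Word d) = [] then wd ([] : Word d) else 0) := by
      intro r hr
      simp only [Finset.mem_range] at hr
      have hsign : ∀ t ∈ Finset.range (r + 1),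
          ((-1 : ℝ) ^ (t + 1)) •
            Ec (a :: y.drop r) (shW (((y.take r).take t).reverse) ((y.take r).drop t))
          = - (Ec (a :: y.drop r) (((-1 : ℝ) ^ t) •
              shW (((y.take r).take t).reverse) ((y.take r).drop t))) := by
        intro t ht
        rw [map_smul, pow_succ]
        simp [neg_smul, mul_smul]
      rw [Finset.sum_congr rfl hsign, Finset.sum_neg_distrib, ← map_sum]
      congr 2
      rw [show r + 1 = (y.take r).length + 1 by rw [List.length_take]; omega]
      exact ih _ (by rw [List.length_take]; omega)
    rw [Finset.sum_congr rfl hinner]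
    have hsingle : ∑ r ∈ Finset.range (m + 1),
        -(Ec (a :: y.drop r) (if (y.take r : Word d) = [] then wd ([] : Word d) else 0))
        = -(wd (a :: y : Word d)) := by
      rw [Finset.sum_eq_single 0]
      · simp
      · intro r hr hrne
        simp only [Finset.mem_range] at hr
        have hne2 : (y.take r : Word d) ≠ [] := by
          intro hc
          apply hrne
          have := congrArg List.length hc
          rw [List.length_take, List.length_nil] at this
          omega
        rw [if_neg hne2]
        simp
      · intro hc
        exact absurd (Finset.mem_range.2 (by omega)) hc
    rw [hsingle]
    abel
end Aux

namespace Aux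
variable {d : ℕ}

lemma rhoW_cons (i : Fin d) (z : Word d) (hz : z ≠ []) :
    rhoW (i :: z) = concM (wd [i]) (rhoW z)
      - concM (wd [z.getLast hz]) (rhoW (i :: z.dropLast)) := by
  cases z with
  | nil => exact absurd rfl hz
  | cons j u => rw [rhoW]

lemma concM_Mc (p : Word d) (x : Ten d) : concM (wd p) x = Mc p x := by
  have : (concM (wd p) : Ten d →ₗ[ℝ] Ten d) = Mc p := by
    apply linext; intro w; simp
  exact LinearMap.congr_fun this x

lemma rhoW_nil : rhoW ([] : Word d) = 0 := by rw [rhoW]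

lemma rhoW_single (i : Fin d) : rhoW [i] = wd [i] := by rw [rhoW]

lemma Blem : ∀ (n : ℕ) (w : Word d), w.length ≤ n →
    rhoW w = ∑ s ∈ Finset.range (w.length + 1),
      (((s : ℝ)) * (-1 : ℝ) ^ (w.length - s)) • shW (w.take s) ((w.drop s).reverse) := by
  intro n
  induction n with
  | zero =>
    intro w h
    have hw : w = [] := by cases w <;> simp_all
    subst hw
    simp [rhoW_nil]
  | succ n ih =>
    intro w hw
    rcases w with _ | ⟨i, z⟩
    · simp [rhoW_nil]
    rcases eq_or_ne z [] with rfl | hz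
    · simp [rhoW_single, Finset.sum_range_succ]
    simp only [List.length_cons] at hw ⊢
    set m := z.length with hm
    have hmpos : 0 < m := by
      cases z with
      | nil => exact absurd rfl hz
      | cons _ _ => simp [hm]
    set b := z.getLast hz with hb
    set x := z.dropLast with hx
    have hxb : x ++ [b] = z := List.dropLast_append_getLast hz
    have hxl : x.length = m - 1 := by simp [hx, hm]
    have ih1 : rhoW z = ∑ t ∈ Finset.range (m + 1),
        (((t : ℝ)) * (-1 : ℝ) ^ (m - t)) • shW (z.take t) ((z.drop t).reverse) :=
      ih z (by omega)
    have ih2 : rhoW (i :: x) = ∑ s ∈ Finset.range (m + 1),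
        (((s : ℝ)) * (-1 : ℝ) ^ (m - s)) • shW ((i :: x).take s) (((i :: x).drop s).reverse) := by
      have := ih (i :: x) (by simp [hxl]; omega)
      simpa [hxl, show m - 1 + 1 = m by omega] using this
    rw [rhoW_cons i z hz, concM_Mc, concM_Mc, ← hb, ← hx, ih1, ih2]
    -- abbreviations
    set E : ℕ → Ten d := fun t => shW (z.take t) ((z.drop t).reverse) with hE
    set G : ℕ → Ten d := fun t => shW (i :: x.take t) ((x.drop t).reverse) with hG
    -- LHS transform
    have hL : ∑ s ∈ Finset.range (m + 1 + 1),
        (((s : ℝ)) * (-1 : ℝ) ^ (m + 1 - s)) • shW ((i :: z).take s) (((i :: z).drop s).reverse)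
        = (((m : ℝ) + 1) • wd (i :: z) +
           ∑ t ∈ Finset.range m, (((t : ℝ) + 1) * (-1 : ℝ) ^ (m - t)) • Mc [i] (E t)) +
           ∑ t ∈ Finset.range m, (((t : ℝ) + 1) * (-1 : ℝ) ^ (m - t)) • Mc [b] (G t) := by
      rw [Finset.sum_range_succ']
      simp only [Nat.cast_zero, zero_mul, zero_smul, add_zero]
      rw [Finset.sum_range_succ]
      have h1 : ((i :: z).take (m + 1)) = i :: z := by
        apply List.take_of_length_le; simp [hm]
      have h2 : ((i :: z).drop (m + 1)) = [] := by
        apply List.drop_eq_nil_of_le; simp [hm]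
      rw [h1, h2]
      have hterm : ∀ t ∈ Finset.range m,
          (((t : ℝ) + 1) * (-1 : ℝ) ^ (m - t)) •
            shW ((i :: z).take (t + 1)) (((i :: z).drop (t + 1)).reverse)
          = (((t : ℝ) + 1) * (-1 : ℝ) ^ (m - t)) • Mc [i] (E t) +
            (((t : ℝ) + 1) * (-1 : ℝ) ^ (m - t)) • Mc [b] (G t) := by
        intro t ht
        simp only [Finset.mem_range] at ht
        have hd : (i :: z).drop (t + 1) = x.drop t ++ [b] := by
          rw [List.drop_succ_cons, ← hxb, List.drop_append_of_le_length (by omega)]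
        have htk : (i :: z).take (t + 1) = i :: x.take t := by
          rw [List.take_succ_cons, ← hxb, List.take_append_of_le_length (by omega)]
        have hd2 : (z.drop t) = x.drop t ++ [b] := by
          rw [← hxb, List.drop_append_of_le_length (by omega)]
        have htk2 : z.take t = x.take t := by
          rw [← hxb, List.take_append_of_le_length (by omega)]
        have hEt : E t = shW (x.take t) (b :: (x.drop t).reverse) := by
          simp only [hE]
          rw [htk2, hd2, List.reverse_append, List.reverse_singleton, List.singleton_append]
        have hGt : G t = shW (i :: x.take t) ((x.drop t).reverse) := rfl
        rw [hd, htk, List.reverse_append,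
          List.reverse_singleton, List.singleton_append, shW_cons, smul_add, hEt, hGt]
      push_cast
      rw [Finset.sum_congr rfl hterm, Finset.sum_add_distrib]
      rw [show m - m = 0 from by omega, pow_zero, mul_one, List.reverse_nil, shW_nil_right]
      abel
    rw [hL]
    -- RHS transform
    have hR1 : Mc [i] (∑ t ∈ Finset.range (m + 1),
        (((t : ℝ)) * (-1 : ℝ) ^ (m - t)) • E t)
        = (m : ℝ) • wd (i :: z) + ∑ t ∈ Finset.range m, (((t : ℝ)) * (-1 : ℝ) ^ (m - t)) • Mc [i] (E t) := by
      rw [map_sum, Finset.sum_range_succ]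
      have hEm : E m = wd z := by
        simp only [hE]
        rw [List.take_of_length_le (by omega), List.drop_eq_nil_of_le (by omega)]
        simp
      rw [map_smul, hEm]
      have : (m - m) = 0 := by omega
      rw [this, pow_zero, mul_one, Mc_wd]
      simp only [List.singleton_append]
      rw [add_comm]
      congr 1
      apply Finset.sum_congr rfl
      intro t ht
      rw [map_smul]
    have hR2 : Mc [b] (∑ s ∈ Finset.range (m + 1),
        (((s : ℝ)) * (-1 : ℝ) ^ (m - s)) • shW ((i :: x).take s) (((i :: x).drop s).reverse))
        = - ∑ t ∈ Finset.range m, (((t : ℝ) + 1) * (-1 : ℝ) ^ (m - t)) • Mc [b] (G t) := by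
      rw [map_sum, Finset.sum_range_succ']
      simp only [Nat.cast_zero, zero_mul, zero_smul, map_zero, add_zero]
      rw [← Finset.sum_neg_distrib]
      apply Finset.sum_congr rfl
      intro t ht
      simp only [Finset.mem_range] at ht
      rw [List.take_succ_cons, List.drop_succ_cons, map_smul]
      have hsign : ((-1 : ℝ)) ^ (m - (t + 1)) = -(-1 : ℝ) ^ (m - t) := by
        rw [show m - t = (m - (t + 1)) + 1 by omega, pow_succ]
        ring
      push_cast
      rw [hsign]
      have hGt : shW (i :: x.take t) ((x.drop t).reverse) = G t := rfl
      rw [hGt, show ((t:ℝ)+1) * -(-1:ℝ)^(m-t) = -(((t:ℝ)+1) * (-1:ℝ)^(m-t)) from by ring,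
        neg_smul]
    rw [hR1, hR2, sub_neg_eq_add]
    have hfin : ∑ t ∈ Finset.range m, ((-1 : ℝ) ^ (m - t)) • Mc [i] (E t) + wd (i :: z) = 0 := by
      have key : Mc [i] (∑ t ∈ Finset.range (m + 1), ((-1 : ℝ) ^ (m - t)) • E t) = 0 := by
        have ha := Aprime m z (le_refl _)
        rw [← hm] at ha
        simp only [hE]
        rw [ha, if_neg hz, map_zero]
      rw [map_sum] at key
      simp only [map_smul] at key
      rw [Finset.sum_range_succ] at key
      have hEm : Mc [i] (E m) = wd (i :: z) := by
        simp only [hE]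
        rw [List.take_of_length_le (by omega), List.drop_eq_nil_of_le (by omega)]
        simp
      rw [show m - m = 0 from by omega, pow_zero, one_smul, hEm] at key
      exact key
    have hsplitL : ∑ t ∈ Finset.range m, (((t : ℝ) + 1) * (-1 : ℝ) ^ (m - t)) • Mc [i] (E t)
        = ∑ t ∈ Finset.range m, (((t : ℝ)) * (-1 : ℝ) ^ (m - t)) • Mc [i] (E t)
          + ∑ t ∈ Finset.range m, ((-1 : ℝ) ^ (m - t)) • Mc [i] (E t) := by
      rw [← Finset.sum_add_distrib]
      apply Finset.sum_congr rfl
      intro t _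
      rw [add_mul, one_mul, add_smul]
    rw [hsplitL]
    have hmsmul : ((m : ℝ) + 1) • wd (i :: z) = (m : ℝ) • wd (i :: z) + wd (i :: z) := by
      rw [add_smul, one_smul]
    rw [hmsmul]
    have hre : (m : ℝ) • wd (i :: z) + wd (i :: z)
        + (∑ t ∈ Finset.range m, (((t : ℝ)) * (-1 : ℝ) ^ (m - t)) • Mc [i] (E t)
           + ∑ t ∈ Finset.range m, ((-1 : ℝ) ^ (m - t)) • Mc [i] (E t))
        + ∑ t ∈ Finset.range m, (((t : ℝ) + 1) * (-1 : ℝ) ^ (m - t)) • Mc [b] (G t)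
        = ((m : ℝ) • wd (i :: z) + ∑ t ∈ Finset.range m, (((t : ℝ)) * (-1 : ℝ) ^ (m - t)) • Mc [i] (E t)
           + ∑ t ∈ Finset.range m, (((t : ℝ) + 1) * (-1 : ℝ) ^ (m - t)) • Mc [b] (G t))
          + (∑ t ∈ Finset.range m, ((-1 : ℝ) ^ (m - t)) • Mc [i] (E t) + wd (i :: z)) := by
      abel
    rw [hre, hfin, add_zero]
end Aux

namespace Aux
variable {d : ℕ}

lemma KeyL (w : Word d) :
    ∑ s ∈ Finset.range (w.length + 1), shuffle (rhoW (w.take s)) (wd (w.drop s))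
      = (w.length : ℝ) • wd w := by
  set n := w.length with hn
  have hmain : ∀ s ∈ Finset.range (n + 1),
      shuffle (rhoW (w.take s)) (wd (w.drop s))
      = ∑ r ∈ Finset.range (s + 1), (((r : ℝ)) * (-1 : ℝ) ^ (s - r)) •
          shuffle (wd (w.take r)) (shW (((w.drop r).take (s - r)).reverse) ((w.drop r).drop (s - r))) := by
    intro s hs
    simp only [Finset.mem_range] at hs
    have hts : (w.take s).length = s := by rw [List.length_take]; omega
    rw [Blem s (w.take s) (by omega), hts]
    rw [map_sum, LinearMap.sum_apply]
    apply Finset.sum_congr rfl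
    intro r hr
    simp only [Finset.mem_range] at hr
    rw [map_smul, LinearMap.smul_apply]
    congr 1
    have e1 : (w.take s).take r = w.take r := by
      rw [List.take_take, min_eq_left (by omega)]
    have e2 : (w.take s).drop r = (w.drop r).take (s - r) := List.drop_take
    have e3 : w.drop s = (w.drop r).drop (s - r) := by
      rw [List.drop_drop]; congr 1; omega
    rw [e1, e2, e3]
    exact shuffle_assoc_wd ((w.take r).length + (((w.drop r).take (s - r)).reverse).length
      + ((w.drop r).drop (s - r)).length) _ _ _ le_rfl
  rw [Finset.sum_congr rfl hmain]
  rw [Finset.sum_comm' (t' := Finset.range (n + 1)) (s' := fun r => Finset.Ico r (n + 1))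
    (by intro s r; simp only [Finset.mem_range, Finset.mem_Ico]; omega)]
  have hinner : ∀ r ∈ Finset.range (n + 1),
      (∑ s ∈ Finset.Ico r (n + 1), (((r : ℝ)) * (-1 : ℝ) ^ (s - r)) •
        shuffle (wd (w.take r)) (shW (((w.drop r).take (s - r)).reverse) ((w.drop r).drop (s - r))))
      = (r : ℝ) • shuffle (wd (w.take r))
          (if (w.drop r : Word d) = [] then wd ([] : Word d) else 0) := by
    intro r hr
    simp only [Finset.mem_range] at hr
    rw [Finset.sum_Ico_eq_sum_range]
    have hstep : ∀ k, r + k - r = k := by omega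
    have hterm : ∀ k ∈ Finset.range (n + 1 - r),
        (((r : ℝ)) * (-1 : ℝ) ^ (r + k - r)) •
          shuffle (wd (w.take r)) (shW (((w.drop r).take (r + k - r)).reverse) ((w.drop r).drop (r + k - r)))
        = (r : ℝ) • (((-1 : ℝ) ^ k) •
            shuffle (wd (w.take r)) (shW (((w.drop r).take k).reverse) ((w.drop r).drop k))) := by
      intro k hk
      rw [hstep, mul_smul]
    rw [Finset.sum_congr rfl hterm, ← Finset.smul_sum]
    congr 1
    have hcollect : ∑ k ∈ Finset.range (n + 1 - r), ((-1 : ℝ) ^ k) •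
        shuffle (wd (w.take r)) (shW (((w.drop r).take k).reverse) ((w.drop r).drop k))
        = shuffle (wd (w.take r)) (∑ k ∈ Finset.range (n + 1 - r), ((-1 : ℝ) ^ k) •
            shW (((w.drop r).take k).reverse) ((w.drop r).drop k)) := by
      rw [map_sum]
      apply Finset.sum_congr rfl
      intro k hk
      rw [map_smul]
    rw [hcollect]
    congr 1
    have hdl : (w.drop r).length = n - r := by simp [hn]
    rw [show n + 1 - r = (w.drop r).length + 1 from by rw [hdl]; omega]
    exact Alem (w.drop r).length (w.drop r) le_rfl
  rw [Finset.sum_congr rfl hinner]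
  rw [Finset.sum_eq_single n]
  · rw [if_pos (by apply List.drop_eq_nil_of_le; omega),
      show w.take n = w from List.take_of_length_le (by omega)]
    rw [shuffle_nil_right]
  · intro r hr hrne
    simp only [Finset.mem_range] at hr
    rw [if_neg (by intro hc; apply hrne; have := congrArg List.length hc; simp [hn] at this; omega)]
    rw [map_zero, smul_zero]
  · intro hc
    exact absurd (Finset.mem_range.2 (by omega)) hc
end Aux

namespace Aux
variable {d : ℕ}

def facs : Word d → Finset (List (Word d))
  | [] => {[]}
  | a :: w => (Finset.range (w.length + 1)).biUnion fun i =>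
      (facs (w.drop i)).image fun L => (a :: w.take i) :: L
termination_by w => w.length
decreasing_by
  simp only [List.length_cons, List.length_drop]
  omega

lemma mem_facs : ∀ (n : ℕ) (w : Word d), w.length ≤ n → ∀ L : List (Word d),
    (L ∈ facs w ↔ (L.flatten = w ∧ ∀ u ∈ L, u ≠ [])) := by
  intro n
  induction n with
  | zero =>
    intro w h L
    have hw : w = [] := by cases w <;> simp_all
    subst hw
    rw [facs]
    simp only [Finset.mem_singleton]
    constructor
    · rintro rfl; simp
    · rintro ⟨h1, h2⟩
      cases L with
      | nil => rfl
      | cons u L' =>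
        exfalso
        have hu : u ≠ [] := h2 u (by simp)
        rw [List.flatten_cons] at h1
        cases u with
        | nil => exact hu rfl
        | cons _ _ => simp at h1
  | succ n ih =>
    intro w hw L
    cases w with
    | nil => exact ih [] (by simp) L
    | cons a w' =>
      rw [facs]
      simp only [Finset.mem_biUnion, Finset.mem_range, Finset.mem_image]
      constructor
      · rintro ⟨i, hi, L', hL', rfl⟩
        have hi' : i ≤ w'.length := by omega
        have := (ih (w'.drop i) (by simp at hw ⊢; omega) L').1 hL'
        refine ⟨?_, ?_⟩
        · rw [List.flatten_cons, this.1]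
          simp [List.take_append_drop]
        · intro u hu
          rcases List.mem_cons.1 hu with rfl | hu'
          · simp
          · exact this.2 u hu'
      · rintro ⟨h1, h2⟩
        cases L with
        | nil => simp at h1
        | cons u L' =>
          have hu : u ≠ [] := h2 u (by simp)
          rw [List.flatten_cons] at h1
          cases u with
          | nil => exact absurd rfl hu
          | cons c u' =>
            have hca : c = a := by
              have := congrArg (fun l => l.head?) h1
              simpa using this
            subst hca
            have h1' : u' ++ L'.flatten = w' := by
              simpa using h1
            refine ⟨u'.length, ?_, L', ?_, ?_⟩
            · have := congrArg List.length h1'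
              simp at this
              omega
            · apply (ih (w'.drop u'.length) (by simp at hw ⊢; omega) L').2
              constructor
              · rw [← h1', List.drop_left]
              · intro v hv; exact h2 v (by simp [hv])
            · congr
              rw [← h1', List.take_left]
end Aux

namespace Aux
variable {d : ℕ}

lemma shProd_cons (x : Ten d) (l : List (Ten d)) :
    shProd (x :: l) = shuffle x (shProd l) := by
  cases l with
  | nil => rw [shProd, shProd, shuffle_nil_right]
  | cons y ys => rw [shProd]

lemma kcoef_cons (m : ℕ) (ms : List ℕ) :
    kcoef (m :: ms) = (((m :: ms).sum : ℕ) : ℝ) * kcoef ms := by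
  rw [kcoef]

lemma facs_sum_lengths (w : Word d) (L : List (Word d)) (hL : L ∈ facs w) :
    (L.map List.length).sum = w.length := by
  have := (mem_facs w.length w le_rfl L).1 hL
  rw [← List.length_flatten, this.1]

lemma MainL : ∀ (n : ℕ) (w : Word d), w.length ≤ n →
    ∑ L ∈ facs w, (kcoef (L.map List.length))⁻¹ • shProd (L.map rhoW) = wd w := by
  intro n
  induction n with
  | zero =>
    intro w h
    have hw : w = [] := by cases w <;> simp_all
    subst hw
    rw [facs]
    rw [Finset.sum_singleton]
    simp only [List.map_nil]
    rw [kcoef, shProd]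
    norm_num
  | succ n ih =>
    intro w hw
    cases w with
    | nil => exact ih [] (by simp)
    | cons a w' =>
      simp only [List.length_cons] at hw
      set m := w'.length with hm
      rw [facs]
      rw [Finset.sum_biUnion]
      swap
      · intro i hi j hj hij
        simp only [Finset.coe_range, Set.mem_Iio] at hi hj
        apply Finset.disjoint_left.2
        rintro L hLi hLj
        simp only [Finset.mem_image] at hLi hLj
        obtain ⟨L1, _, rfl⟩ := hLi
        obtain ⟨L2, _, hL2⟩ := hLj
        apply hij
        have hhead := congrArg (fun l => l.head?) hL2
        simp only [List.head?_cons, Option.some.injEq] at hhead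
        have := congrArg List.length hhead
        simp only [List.length_cons, List.length_take] at this
        omega
      have hcol : ∀ i ∈ Finset.range (m + 1),
          (∑ L ∈ (facs (w'.drop i)).image fun L => (a :: w'.take i) :: L,
            (kcoef (L.map List.length))⁻¹ • shProd (L.map rhoW))
          = (((m : ℝ) + 1))⁻¹ • shuffle (rhoW ((a :: w').take (i + 1))) (wd ((a :: w').drop (i + 1))) := by
        intro i hi
        simp only [Finset.mem_range] at hi
        rw [Finset.sum_image (by intro x _ y _ h; injection h)]
        have hterm : ∀ L ∈ facs (w'.drop i),
            (kcoef ((((a :: w'.take i) :: L)).map List.length))⁻¹ •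
              shProd (((a :: w'.take i) :: L).map rhoW)
            = ((m : ℝ) + 1)⁻¹ • ((kcoef (L.map List.length))⁻¹ •
                shuffle (rhoW (a :: w'.take i)) (shProd (L.map rhoW))) := by
          intro L hL
          rw [List.map_cons, kcoef_cons, List.map_cons, shProd_cons]
          have hsum : ((a :: w'.take i).length :: List.map List.length L).sum = m + 1 := by
            rw [List.sum_cons, facs_sum_lengths _ _ hL]
            simp only [List.length_cons, List.length_take, List.length_drop]
            omega
          rw [hsum, mul_inv, mul_smul]
          push_cast
          rfl
        rw [Finset.sum_congr rfl hterm, ← Finset.smul_sum]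
        congr 1
        have : ∑ L ∈ facs (w'.drop i), (kcoef (List.map List.length L))⁻¹ •
            shuffle (rhoW (a :: w'.take i)) (shProd (List.map rhoW L))
            = shuffle (rhoW (a :: w'.take i)) (∑ L ∈ facs (w'.drop i),
                (kcoef (List.map List.length L))⁻¹ • shProd (List.map rhoW L)) := by
          rw [map_sum]
          apply Finset.sum_congr rfl
          intro L hL
          rw [map_smul]
        rw [this, ih (w'.drop i) (by simp [hm]; omega)]
        rw [List.take_succ_cons, List.drop_succ_cons]
      rw [Finset.sum_congr rfl hcol, ← Finset.smul_sum]
      have hkey := KeyL (a :: w')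
      rw [Finset.sum_range_succ'] at hkey
      simp only [List.take_zero, rhoW_nil, map_zero, LinearMap.zero_apply, add_zero] at hkey
      simp only [List.length_cons, ← hm] at hkey
      have hne : ((m : ℝ) + 1) ≠ 0 := by positivity
      rw [hkey]
      push_cast
      rw [inv_smul_smul₀ hne]
end Aux

open Aux in
/-- Every nonempty word `w` equals the sum, over all factorizations of `w` into a
concatenation of nonempty words `w₁⋯w_n`, of `(1/k_{|w₁|,…,|w_n|}) ρ(w₁) ⧢ ⋯ ⧢ ρ(w_n)`.
In particular, any linear spanning set of the image of `ρ` generates the shuffle algebra. -/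
theorem words_as_rho_shuffles (d : ℕ) (hd : 1 ≤ d) :
    (∀ w : Word d, w ≠ [] →
      wd w = ∑ᶠ (L : List (Word d)) (_ : L.flatten = w ∧ ∀ u ∈ L, u ≠ []),
        (kcoef (L.map List.length))⁻¹ • shProd (L.map (rhoW (d := d)))) ∧
    (∀ X : Set (Ten d), X ⊆ Set.range (rhoMap (d := d)) →
      Set.range (rhoMap (d := d)) ⊆ (Submodule.span ℝ X : Set (Ten d)) →
      ShuffleGen X) := by
  constructor
  · intro w hw
    have hset : {L : List (Word d) | L.flatten = w ∧ ∀ u ∈ L, u ≠ []} = ↑(facs w) := by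
      ext L
      rw [Set.mem_setOf_eq, Finset.mem_coe, mem_facs w.length w le_rfl L]
    rw [show (∑ᶠ (L : List (Word d)) (_ : L.flatten = w ∧ ∀ u ∈ L, u ≠ []),
        (kcoef (L.map List.length))⁻¹ • shProd (L.map (rhoW (d := d))))
        = ∑ᶠ L ∈ {L : List (Word d) | L.flatten = w ∧ ∀ u ∈ L, u ≠ []},
            (kcoef (L.map List.length))⁻¹ • shProd (L.map (rhoW (d := d))) from rfl,
      hset, finsum_mem_coe_finset]
    exact (MainL w.length w le_rfl).symm
  · intro X hX1 hX2 p h0 hXp hmul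
    have hrho : ∀ u : Word d, rhoW u ∈ p := by
      intro u
      have h1 : rhoW u ∈ Set.range (rhoMap (d := d)) := by
        refine ⟨wd u, ?_⟩
        simp [rhoMap, wd, Finsupp.lsum_single, LinearMap.toSpanSingleton_apply]
      have h2 := hX2 h1
      exact (Submodule.span_le.2 hXp) h2
    have hwp : ∀ w : Word d, wd w ∈ p := by
      intro w
      have hsp : ∀ l : List (Word d), shProd (l.map rhoW) ∈ p := by
        intro l
        induction l with
        | nil => rw [List.map_nil, shProd]; exact h0
        | cons u l' ihl => rw [List.map_cons, shProd_cons]; exact hmul _ (hrho u) _ ihl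
      rw [← MainL w.length w le_rfl]
      apply Submodule.sum_mem
      intro L hL
      exact Submodule.smul_mem _ _ (hsp L)
    intro z
    induction z using Finsupp.induction_linear with
    | zero => exact p.zero_mem
    | add f g hf hg => exact p.add_mem hf hg
    | single w c =>
      rw [Aux.single_eq_smul_wd]
      exact Submodule.smul_mem _ _ (hwp w)

end
end

section
/- For every nonzero z ∈ T(ℝ^d) there exist T > 0 and a piecewise linear path X: [0,T] → ℝ^d such that ⟨z, S(X)_{0,T}⟩ ≠ 0. -/
noncomputable section

variable {d : ℕ}

/-- A path `X : [0,T] → ℝ^d` is piecewise linear: continuous on `[0,T]` and affine on each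
interval of a finite partition `0 = t₀ < t₁ < … < t_k = T`. -/
def PWLPath (d : ℕ) (T : ℝ) (X : ℝ → Fin d → ℝ) : Prop :=
  ContinuousOn X (Set.Icc 0 T) ∧
  ∃ (k : ℕ) (t : ℕ → ℝ), 0 < k ∧ t 0 = 0 ∧ t k = T ∧ (∀ j < k, t j < t (j + 1)) ∧
    ∀ j < k, ∃ a b : Fin d → ℝ, ∀ s ∈ Set.Icc (t j) (t (j + 1)), ∀ i, X s i = a i * s + b i

/-- Signature coefficients, indexed by reversed words:
`sigRev X [] t = 1` and `sigRev X (i :: w) t = ∫₀ᵗ sigRev X w s · (Xⁱ)'(s) ds`,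
corresponding to `⟨w·i, S(X)_{0,t}⟩ = ∫₀ᵗ ⟨w, S(X)_{0,s}⟩ dXⁱ_s`. -/
def sigRev (X : ℝ → Fin d → ℝ) : Word d → ℝ → ℝ
  | [], _ => 1
  | i :: w, t => ∫ s in (0:ℝ)..t, sigRev X w s * deriv (fun u => X u i) s

/-- The signature coefficient `⟨w, S(X)_{0,t}⟩` of the word `w`. -/
def sigCoeff (X : ℝ → Fin d → ℝ) (w : Word d) (t : ℝ) : ℝ := sigRev X w.reverse t

/-- The pairing `⟨z, S(X)_{0,t}⟩` for `z ∈ T(ℝ^d)`, extended bilinearly. -/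
def sigPair (X : ℝ → Fin d → ℝ) (z : Ten d) (t : ℝ) : ℝ :=
  z.sum fun w c => c * sigCoeff X w t


open MeasureTheory intervalIntegral Set

namespace SigProof

variable {d : ℕ}

/-- ramp function -/
def ramp (x : ℝ) : ℝ := max 0 (min x 1)

lemma ramp_continuous : Continuous ramp :=
  continuous_const.max (continuous_id.min continuous_const)

lemma ramp_of_nonpos {x : ℝ} (h : x ≤ 0) : ramp x = 0 := by
  unfold ramp
  rw [min_eq_left (h.trans zero_le_one), max_eq_left h]

lemma ramp_of_one_le {x : ℝ} (h : 1 ≤ x) : ramp x = 1 := by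
  unfold ramp
  rw [min_eq_right h, max_eq_right zero_le_one]

lemma ramp_of_mem {x : ℝ} (h0 : 0 ≤ x) (h1 : x ≤ 1) : ramp x = x := by
  unfold ramp
  rw [min_eq_left h1, max_eq_right h0]

def coefP (iDir : ℕ → Fin d) (lam : ℕ → ℝ) (j : ℕ) (i : Fin d) : ℝ :=
  if iDir j = i then lam j else 0

def pathX (n : ℕ) (iDir : ℕ → Fin d) (lam : ℕ → ℝ) : ℝ → Fin d → ℝ :=
  fun s i => ∑ j ∈ Finset.range n, coefP iDir lam j i * ramp (s - j)

lemma pathX_continuous (n : ℕ) (iDir : ℕ → Fin d) (lam : ℕ → ℝ) :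
    Continuous (pathX n iDir lam) := by
  apply continuous_pi
  intro i
  apply continuous_finset_sum
  intro j _
  exact continuous_const.mul (ramp_continuous.comp (continuous_id.sub continuous_const))

def bSeg (iDir : ℕ → Fin d) (lam : ℕ → ℝ) (j : ℕ) (i : Fin d) : ℝ :=
  (∑ j' ∈ Finset.range j, coefP iDir lam j' i) - j * coefP iDir lam j i

lemma pathX_affine (n : ℕ) (iDir : ℕ → Fin d) (lam : ℕ → ℝ) {j : ℕ} (hj : j < n)
    {s : ℝ} (hs : s ∈ Set.Icc (j : ℝ) ((j : ℝ) + 1)) (i : Fin d) :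
    pathX n iDir lam s i = coefP iDir lam j i * s + bSeg iDir lam j i := by
  obtain ⟨hs1, hs2⟩ := hs
  have key : ∀ j' ∈ Finset.range n, coefP iDir lam j' i * ramp (s - j') =
      (if j' < j then coefP iDir lam j' i else
        if j' = j then coefP iDir lam j i * (s - j) else 0) := by
    intro j' _
    rcases lt_trichotomy j' j with h | h | h
    · rw [if_pos h, ramp_of_one_le, mul_one]
      have : (j' : ℝ) + 1 ≤ j := by exact_mod_cast h
      linarith
    · subst h
      rw [if_neg (lt_irrefl _), if_pos rfl, ramp_of_mem (by linarith) (by linarith)]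
    · rw [if_neg (by omega), if_neg (by omega), ramp_of_nonpos, mul_zero]
      have : (j : ℝ) + 1 ≤ j' := by exact_mod_cast h
      linarith
  unfold pathX
  rw [Finset.sum_congr rfl key]
  rw [Finset.range_eq_Ico, ← Finset.sum_Ico_consecutive _ (Nat.zero_le (j+1)) hj]
  have h2 : ∑ j' ∈ Finset.Ico (j+1) n, (if j' < j then coefP iDir lam j' i else
      if j' = j then coefP iDir lam j i * (s - j) else 0) = 0 := by
    apply Finset.sum_eq_zero
    intro j' hj'
    rw [Finset.mem_Ico] at hj'
    rw [if_neg (by omega), if_neg (by omega)]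
  rw [h2, add_zero, ← Finset.range_eq_Ico, Finset.sum_range_succ,
    if_neg (lt_irrefl _), if_pos rfl]
  have h3 : ∀ j' ∈ Finset.range j, (if j' < j then coefP iDir lam j' i else
      if j' = j then coefP iDir lam j i * (s - j) else 0) = coefP iDir lam j' i := by
    intro j' hj'
    rw [Finset.mem_range] at hj'
    rw [if_pos hj']
  rw [Finset.sum_congr rfl h3]
  unfold bSeg
  ring

lemma deriv_pathX_seg (n : ℕ) (iDir : ℕ → Fin d) (lam : ℕ → ℝ) {j : ℕ} (hj : j < n)
    {s : ℝ} (hs : s ∈ Set.Ioo (j : ℝ) ((j : ℝ) + 1)) (i : Fin d) :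
    deriv (fun u => pathX n iDir lam u i) s = coefP iDir lam j i := by
  have hev : (fun u => pathX n iDir lam u i) =ᶠ[nhds s]
      (fun u => coefP iDir lam j i * u + bSeg iDir lam j i) := by
    filter_upwards [isOpen_Ioo.mem_nhds hs] with u hu
    exact pathX_affine n iDir lam hj (Ioo_subset_Icc_self hu) i
  rw [hev.deriv_eq]
  have : HasDerivAt (fun u : ℝ => coefP iDir lam j i * u + bSeg iDir lam j i)
      (coefP iDir lam j i) s := by
    simpa using ((hasDerivAt_id s).const_mul (coefP iDir lam j i)).add_const
      (bSeg iDir lam j i)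
  exact this.deriv

lemma deriv_pathX_neg (n : ℕ) (iDir : ℕ → Fin d) (lam : ℕ → ℝ)
    {s : ℝ} (hs : s < 0) (i : Fin d) :
    deriv (fun u => pathX n iDir lam u i) s = 0 := by
  have hev : (fun u => pathX n iDir lam u i) =ᶠ[nhds s] (fun _ => (0:ℝ)) := by
    filter_upwards [isOpen_Iio.mem_nhds (show s ∈ Iio (0:ℝ) from hs)] with u hu
    unfold pathX
    apply Finset.sum_eq_zero
    intro j _
    rw [ramp_of_nonpos, mul_zero]
    have : (0:ℝ) ≤ j := Nat.cast_nonneg j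
    have : u < 0 := hu
    linarith
  rw [hev.deriv_eq, deriv_const]

lemma deriv_pathX_gt (n : ℕ) (iDir : ℕ → Fin d) (lam : ℕ → ℝ)
    {s : ℝ} (hs : (n : ℝ) < s) (i : Fin d) :
    deriv (fun u => pathX n iDir lam u i) s = 0 := by
  have hev : (fun u => pathX n iDir lam u i) =ᶠ[nhds s]
      (fun _ => ∑ j ∈ Finset.range n, coefP iDir lam j i) := by
    filter_upwards [isOpen_Ioi.mem_nhds (show s ∈ Ioi (n:ℝ) from hs)] with u hu
    unfold pathX
    apply Finset.sum_congr rfl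
    intro j hjr
    rw [Finset.mem_range] at hjr
    rw [ramp_of_one_le, mul_one]
    have : (j : ℝ) + 1 ≤ n := by exact_mod_cast hjr
    have : (n : ℝ) < u := hu
    linarith
  rw [hev.deriv_eq, deriv_const]

/-- step derivative model -/
def stepD (n : ℕ) (iDir : ℕ → Fin d) (lam : ℕ → ℝ) (i : Fin d) (s : ℝ) : ℝ :=
  ∑ j ∈ Finset.range n, Set.indicator (Set.Ioo (j : ℝ) ((j : ℝ) + 1))
    (fun _ => coefP iDir lam j i) s

lemma stepD_measurable (n : ℕ) (iDir : ℕ → Fin d) (lam : ℕ → ℝ) (i : Fin d) :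
    Measurable (stepD n iDir lam i) := by
  apply Finset.measurable_sum
  intro j _
  exact measurable_const.indicator measurableSet_Ioo

lemma stepD_bound (n : ℕ) (iDir : ℕ → Fin d) (lam : ℕ → ℝ) (i : Fin d) (s : ℝ) :
    ‖stepD n iDir lam i s‖ ≤ ∑ j ∈ Finset.range n, |coefP iDir lam j i| := by
  rw [Real.norm_eq_abs]
  refine (Finset.abs_sum_le_sum_abs _ _).trans (Finset.sum_le_sum ?_)
  intro j _
  rw [Set.indicator_apply]
  split_ifs
  · exact le_refl _
  · simp

lemma deriv_pathX_ae (n : ℕ) (iDir : ℕ → Fin d) (lam : ℕ → ℝ) (i : Fin d) :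
    (fun s => deriv (fun u => pathX n iDir lam u i) s) =ᵐ[volume] stepD n iDir lam i := by
  set N : Set ℝ := ⋃ j ∈ Finset.range (n+1), {((j : ℕ) : ℝ)} with hNdef
  have hN : volume N = 0 := by
    apply measure_biUnion_null_iff (Finset.countable_toSet _) |>.mpr
    intro j _
    exact measure_singleton _
  refine (MeasureTheory.ae_iff.mpr ?_)
  refine measure_mono_null ?_ hN
  intro s hs
  simp only [Set.mem_setOf_eq] at hs
  by_contra hsN
  apply hs; clear hs
  have hsInt : ∀ j : ℕ, j ≤ n → s ≠ (j : ℝ) := by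
    intro j hj hsj
    apply hsN
    simp only [hNdef, Set.mem_iUnion, Set.mem_singleton_iff]
    exact ⟨j, by simp [Finset.mem_range]; omega, hsj⟩
  rcases lt_trichotomy s 0 with h0 | h0 | h0
  · rw [deriv_pathX_neg n iDir lam h0 i]
    symm
    apply Finset.sum_eq_zero
    intro j _
    apply Set.indicator_of_notMem
    intro hmem
    have : (0:ℝ) ≤ (j:ℝ) := Nat.cast_nonneg j
    have := hmem.1
    linarith
  · exact absurd h0 (by intro h; exact hsInt 0 (Nat.zero_le n) (by push_cast; linarith))
  · rcases lt_trichotomy s (n : ℝ) with h1 | h1 | h1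
    · -- s ∈ (0, n)
      set j0 : ℕ := ⌊s⌋.toNat with hj0
      have hfl : (0:ℤ) ≤ ⌊s⌋ := Int.floor_nonneg.mpr h0.le
      have hcast : ((j0 : ℕ) : ℝ) = (⌊s⌋ : ℝ) := by
        rw [hj0]; exact_mod_cast congrArg (Int.cast : ℤ → ℝ) (Int.toNat_of_nonneg hfl)
      have hle : ((j0 : ℕ) : ℝ) ≤ s := by rw [hcast]; exact Int.floor_le s
      have hlt : s < (j0 : ℝ) + 1 := by rw [hcast]; exact Int.lt_floor_add_one s
      have hj0n : j0 < n := by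
        by_contra hc
        push_neg at hc
        have : (n : ℝ) ≤ (j0 : ℝ) := by exact_mod_cast hc
        linarith
      have hne : s ≠ (j0 : ℝ) := hsInt j0 hj0n.le
      have hmem : s ∈ Set.Ioo ((j0:ℕ) : ℝ) ((j0 : ℝ) + 1) := ⟨lt_of_le_of_ne hle (Ne.symm hne), hlt⟩
      rw [deriv_pathX_seg n iDir lam hj0n hmem i]
      unfold stepD
      rw [Finset.sum_eq_single j0]
      · rw [Set.indicator_of_mem hmem]
      · intro j hjr hjne
        apply Set.indicator_of_notMem
        intro hmem'
        apply hjne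
        have h1 := hmem'.1
        have h2 := hmem'.2
        -- (j:ℝ) < s < j+1 and j0 ≤ s < j0+1 forces j = j0
        have : (j : ℝ) < (j0 : ℝ) + 1 := lt_of_lt_of_le h1 (by linarith)
        have h3 : j < j0 + 1 := by exact_mod_cast this
        have : ((j0:ℕ) : ℝ) < (j : ℝ) + 1 := lt_of_le_of_lt hle h2
        have h4 : j0 < j + 1 := by exact_mod_cast this
        omega
      · intro hj0r
        exact absurd (Finset.mem_range.mpr hj0n) hj0r
    · exact absurd h1 (hsInt n le_rfl)
    · rw [deriv_pathX_gt n iDir lam h1 i]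
      symm
      apply Finset.sum_eq_zero
      intro j hjr
      rw [Finset.mem_range] at hjr
      apply Set.indicator_of_notMem
      intro hmem
      have h2 := hmem.2
      have : (j : ℝ) + 1 ≤ (n : ℝ) := by exact_mod_cast hjr
      linarith


/-- integrability of `f * deriv Xⁱ` for continuous `f` -/
lemma intInt (n : ℕ) (iDir : ℕ → Fin d) (lam : ℕ → ℝ) (i : Fin d)
    {f : ℝ → ℝ} (hf : Continuous f) (a b : ℝ) :
    IntervalIntegrable (fun s => f s * deriv (fun u => pathX n iDir lam u i) s)
      volume a b := by
  have h1 : IntervalIntegrable (fun s => f s * stepD n iDir lam i s) volume a b := by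
    rw [intervalIntegrable_iff]
    have hint : IntegrableOn f (Set.uIoc a b) volume :=
      (hf.intervalIntegrable a b).def'
    have := MeasureTheory.Integrable.bdd_mul hint
      ((stepD_measurable n iDir lam i).aestronglyMeasurable.restrict)
      (Filter.Eventually.of_forall (stepD_bound n iDir lam i))
    apply this.congr
    filter_upwards with s using mul_comm _ _
  apply h1.congr_ae
  have hae := (deriv_pathX_ae n iDir lam i)
  filter_upwards [MeasureTheory.ae_restrict_of_ae hae] with s hs
  rw [hs]

/-- Chen one-segment polynomial expression -/
def chen (c : ℝ) (i : Fin d) (base : Word d → ℝ) (u : Word d) (x : ℝ) : ℝ :=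
  ∑ k ∈ Finset.range (u.length + 1),
    if u.take k = List.replicate k i then
      base (u.drop k) * (c ^ k * x ^ k / (k.factorial : ℝ)) else 0

lemma chen_continuous (c : ℝ) (i : Fin d) (base : Word d → ℝ) (u : Word d) :
    Continuous (chen c i base u) := by
  apply continuous_finset_sum
  intro k _
  split_ifs
  · continuity
  · exact continuous_const

lemma sigRev_cons (X : ℝ → Fin d → ℝ) (i : Fin d) (u : Word d) (t : ℝ) :
    sigRev X (i :: u) t = ∫ s in (0:ℝ)..t, sigRev X u s * deriv (fun v => X v i) s := rfl

/-- master induction: continuity and segment formula -/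
lemma master (n : ℕ) (iDir : ℕ → Fin d) (lam : ℕ → ℝ) (u : Word d) :
    Continuous (sigRev (pathX n iDir lam) u) ∧
    (∀ j : ℕ, j < n → ∀ x ∈ Set.Icc (0:ℝ) 1,
      sigRev (pathX n iDir lam) u ((j : ℝ) + x) =
        chen (lam j) (iDir j) (fun v => sigRev (pathX n iDir lam) v j) u x) := by
  set X := pathX n iDir lam with hX
  induction u with
  | nil =>
    constructor
    · exact continuous_const
    · intro j hj x hx
      show (1:ℝ) = chen (lam j) (iDir j) _ [] x
      unfold chen
      simp [sigRev]
  | cons i u ih =>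
    obtain ⟨ihc, ihs⟩ := ih
    have hii : ∀ a b : ℝ, IntervalIntegrable
        (fun s => sigRev X u s * deriv (fun v => X v i) s) volume a b :=
      fun a b => intInt n iDir lam i ihc a b
    constructor
    · rw [show sigRev X (i :: u) = fun t => ∫ s in (0:ℝ)..t,
        sigRev X u s * deriv (fun v => X v i) s from rfl]
      exact intervalIntegral.continuous_primitive hii 0
    · intro j hj x hx
      obtain ⟨hx0, hx1⟩ := hx
      have hsplit : sigRev X (i :: u) ((j:ℝ) + x) = sigRev X (i :: u) (j:ℝ) +
          ∫ s in (j:ℝ)..((j:ℝ)+x), sigRev X u s * deriv (fun v => X v i) s := by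
        rw [sigRev_cons, sigRev_cons, intervalIntegral.integral_add_adjacent_intervals
          (hii 0 (j:ℝ)) (hii (j:ℝ) ((j:ℝ)+x))]
      rw [hsplit]
      have hcongr : ∫ s in (j:ℝ)..((j:ℝ)+x), sigRev X u s * deriv (fun v => X v i) s =
          ∫ s in (j:ℝ)..((j:ℝ)+x),
            coefP iDir lam j i * chen (lam j) (iDir j)
              (fun v => sigRev X v j) u (s - j) := by
        apply intervalIntegral.integral_congr_ae
        have hone : volume ({(j:ℝ)+1} : Set ℝ) = 0 := measure_singleton _
        have hae : ∀ᵐ s : ℝ, s ≠ (j:ℝ)+1 := by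
          rw [MeasureTheory.ae_iff]
          simpa using hone
        filter_upwards [hae] with s hs hmem
        have hIoc : s ∈ Set.Ioc (j:ℝ) ((j:ℝ)+x) := by
          rwa [Set.uIoc_of_le (by linarith : (j:ℝ) ≤ (j:ℝ)+x)] at hmem
        have hIoo : s ∈ Set.Ioo (j:ℝ) ((j:ℝ)+1) := by
          constructor
          · exact hIoc.1
          · rcases lt_or_eq_of_le (hIoc.2.trans (by linarith : (j:ℝ)+x ≤ (j:ℝ)+1)) with h | h
            · exact h
            · exact absurd h hs
        rw [deriv_pathX_seg n iDir lam hj hIoo i]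
        have hseg := ihs j hj (s - (j:ℝ)) ⟨by linarith [hIoo.1], by linarith [hIoo.2]⟩
        rw [show (j:ℝ) + (s - (j:ℝ)) = s by ring] at hseg
        rw [hseg]
        ring
      rw [hcongr, intervalIntegral.integral_const_mul]
      have hcs : ∫ s in (j:ℝ)..((j:ℝ)+x),
          chen (lam j) (iDir j) (fun v => sigRev X v j) u (s - (j:ℝ)) =
          ∫ y in (0:ℝ)..x, chen (lam j) (iDir j) (fun v => sigRev X v j) u y := by
        rw [intervalIntegral.integral_comp_sub_right _ (j:ℝ)]
        norm_num
      rw [hcs]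
      -- integrate chen
      have hint : ∫ y in (0:ℝ)..x, chen (lam j) (iDir j) (fun v => sigRev X v j) u y =
          ∑ k ∈ Finset.range (u.length + 1),
            (if u.take k = List.replicate k (iDir j) then
              (sigRev X (u.drop k) j) *
                ((lam j) ^ k * x ^ (k+1) / ((k+1).factorial : ℝ)) else 0) := by
        unfold chen
        rw [intervalIntegral.integral_finset_sum]
        · apply Finset.sum_congr rfl
          intro k _
          split_ifs with hc
          · rw [intervalIntegral.integral_const_mul]
            rw [show (fun y : ℝ => (lam j) ^ k * y ^ k / (k.factorial : ℝ)) =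
              (fun y : ℝ => ((lam j) ^ k / (k.factorial : ℝ)) * y ^ k) from by
                funext y; ring]
            rw [intervalIntegral.integral_const_mul, integral_pow]
            have hk : ((k.factorial : ℝ)) ≠ 0 := by exact_mod_cast k.factorial_ne_zero
            have hk1 : ((k:ℝ) + 1) ≠ 0 := by positivity
            rw [Nat.factorial_succ]
            push_cast
            field_simp
            ring_nf
            try exact Or.inl trivial
            try trivial
          · simp
        · intro k _
          split_ifs
          · apply Continuous.intervalIntegrable; continuity
          · exact intervalIntegrable_const
      rw [hint]
      unfold chen
      conv_rhs => rw [show (i :: u).length + 1 = (u.length + 1) + 1 from by simp,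
        Finset.sum_range_succ']
      beta_reduce
      have hterm : ∀ k ∈ Finset.range (u.length + 1),
          coefP iDir lam j i * (if u.take k = List.replicate k (iDir j) then
            sigRev X (u.drop k) (j:ℝ) * ((lam j)^k * x^(k+1) / (((k+1).factorial : ℕ) : ℝ)) else 0)
          = (if (i :: u).take (k+1) = List.replicate (k+1) (iDir j) then
            sigRev X ((i :: u).drop (k+1)) (j:ℝ) *
              ((lam j)^(k+1) * x^(k+1) / (((k+1).factorial : ℕ) : ℝ)) else 0) := by
        intro k _
        have htake : (i :: u).take (k+1) = List.replicate (k+1) (iDir j) ↔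
            (i = iDir j ∧ u.take k = List.replicate k (iDir j)) := by
          rw [List.take_succ_cons, List.replicate_succ, List.cons.injEq]
        have hdrop : (i :: u).drop (k+1) = u.drop k := rfl
        rw [hdrop]
        by_cases hi : iDir j = i
        · have hcoef : coefP iDir lam j i = lam j := by rw [coefP, if_pos hi]
          rw [hcoef]
          by_cases hA : u.take k = List.replicate k (iDir j)
          · rw [if_pos hA, if_pos (htake.mpr ⟨hi.symm, hA⟩)]
            ring
          · rw [if_neg hA, if_neg (fun h => hA (htake.mp h).2), mul_zero]
        · have hcoef : coefP iDir lam j i = 0 := by rw [coefP, if_neg hi]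
          rw [hcoef, zero_mul]
          rw [if_neg (fun h => hi ((htake.mp h).1.symm))]
      rw [Finset.mul_sum, Finset.sum_congr rfl hterm, add_comm]
      congr 1
      simp


lemma sigRev_zero (n : ℕ) (iDir : ℕ → Fin d) (lam : ℕ → ℝ) (u : Word d) :
    sigRev (pathX n iDir lam) u 0 = if u = [] then 1 else 0 := by
  cases u with
  | nil => simp [sigRev]
  | cons i u => rw [sigRev_cons, intervalIntegral.integral_same, if_neg (by simp)]

open MvPolynomial in
/-- the formal signature polynomial at integer times -/
def Vp (iDir : ℕ → Fin d) : ℕ → Word d → MvPolynomial ℕ ℝ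
  | 0, u => if u = [] then 1 else 0
  | t+1, u => ∑ k ∈ Finset.range (u.length + 1),
      if u.take k = List.replicate k (iDir t) then
        MvPolynomial.C (((k.factorial : ℕ) : ℝ))⁻¹ * MvPolynomial.X t ^ k *
          Vp iDir t (u.drop k)
      else 0

open MvPolynomial in
lemma sigRev_nat (n : ℕ) (iDir : ℕ → Fin d) (lam : ℕ → ℝ) :
    ∀ t : ℕ, t ≤ n → ∀ u : Word d,
      sigRev (pathX n iDir lam) u (t : ℝ) = MvPolynomial.eval lam (Vp iDir t u) := by
  intro t
  induction t with
  | zero =>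
    intro _ u
    rw [show ((0:ℕ):ℝ) = 0 from by norm_num, sigRev_zero]
    unfold Vp
    split_ifs <;> simp
  | succ t ih =>
    intro ht u
    have htn : t < n := ht
    have h1 : ((t+1 : ℕ) : ℝ) = (t : ℝ) + 1 := by push_cast; ring
    rw [h1, (master n iDir lam u).2 t htn 1 ⟨zero_le_one, le_refl 1⟩]
    unfold chen Vp
    rw [map_sum]
    apply Finset.sum_congr rfl
    intro k _
    rw [apply_ite (MvPolynomial.eval lam)]
    split_ifs with hc
    · beta_reduce
      rw [ih htn.le]
      simp only [map_mul, map_pow, eval_C, eval_X, one_pow]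
      ring
    · simp

/-- the word read out along the direction function -/
def dword (iDir : ℕ → Fin d) : ℕ → Word d
  | 0 => []
  | t+1 => iDir t :: dword iDir t

/-- square-free monomial on the first `t` variables -/
def mu (t : ℕ) : ℕ →₀ ℕ := ∑ j ∈ Finset.range t, Finsupp.single j 1

lemma mu_apply (t j : ℕ) : mu t j = if j < t then 1 else 0 := by
  unfold mu
  rw [Finsupp.finset_sum_apply]
  rw [show (∑ j' ∈ Finset.range t, Finsupp.single j' 1 j) =
    ∑ j' ∈ Finset.range t, if j' = j then 1 else 0 from
    Finset.sum_congr rfl (fun j' _ => Finsupp.single_apply)]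
  rw [Finset.sum_ite_eq' (Finset.range t) j (fun _ => 1)]
  by_cases h : j < t <;> simp [Finset.mem_range, h]

lemma mu_succ (t : ℕ) : mu (t+1) = Finsupp.single t 1 + mu t := by
  unfold mu
  rw [Finset.sum_range_succ, add_comm]

open MvPolynomial in
lemma Vp_supported (iDir : ℕ → Fin d) : ∀ (t : ℕ) (u : Word d),
    Vp iDir t u ∈ MvPolynomial.supported ℝ {j : ℕ | j < t} := by
  intro t
  induction t with
  | zero =>
    intro u
    unfold Vp
    split_ifs
    · exact one_mem _
    · exact zero_mem _
  | succ t ih =>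
    intro u
    unfold Vp
    apply sum_mem
    intro k _
    split_ifs
    · refine mul_mem (mul_mem ?_ (pow_mem ?_ k)) ?_
      · rw [show (MvPolynomial.C ((((k.factorial : ℕ)) : ℝ))⁻¹ : MvPolynomial ℕ ℝ) =
          algebraMap ℝ _ ((((k.factorial : ℕ)) : ℝ))⁻¹ from rfl]
        exact Subalgebra.algebraMap_mem _ _
      · exact (X_mem_supported.mpr (by simp))
      · exact MvPolynomial.supported_mono (fun j (hj : j < t) => Nat.lt_succ_of_lt hj)
          (ih (u.drop k))
    · exact zero_mem _

open MvPolynomial in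
lemma coeff_zero_of_unsupported {p : MvPolynomial ℕ ℝ} {s : Set ℕ}
    (hp : p ∈ MvPolynomial.supported ℝ s) {m : ℕ →₀ ℕ} {j : ℕ}
    (hj : j ∈ m.support) (hjs : j ∉ s) : MvPolynomial.coeff m p = 0 := by
  by_contra h
  have hm : m ∈ p.support := MvPolynomial.mem_support_iff.mpr h
  have : j ∈ p.vars := (MvPolynomial.mem_vars j).mpr ⟨m, hm, hj⟩
  exact hjs ((MvPolynomial.mem_supported.mp hp) this)

open MvPolynomial in
lemma mem_support_mu_succ (t : ℕ) : t ∈ (mu (t+1)).support := by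
  rw [Finsupp.mem_support_iff, mu_apply, if_pos (Nat.lt_succ_self t)]
  exact one_ne_zero

open MvPolynomial in
lemma coeff_mu_Vp (iDir : ℕ → Fin d) : ∀ (t : ℕ) (u : Word d),
    MvPolynomial.coeff (mu t) (Vp iDir t u) = if u = dword iDir t then 1 else 0 := by
  intro t
  induction t with
  | zero =>
    intro u
    unfold Vp dword
    rcases eq_or_ne u [] with h | h
    · rw [if_pos h, if_pos h]
      simp [mu]
    · rw [if_neg h, if_neg h]
      simp
  | succ t ih =>
    intro u
    unfold Vp
    rw [MvPolynomial.coeff_sum]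
    have hterm : ∀ k ∈ Finset.range (u.length + 1),
        MvPolynomial.coeff (mu (t+1))
          (if u.take k = List.replicate k (iDir t) then
            MvPolynomial.C (((k.factorial : ℕ) : ℝ))⁻¹ * MvPolynomial.X t ^ k *
              Vp iDir t (u.drop k)
          else 0) =
        (if k = 1 then (if u.take 1 = [iDir t] ∧ u.drop 1 = dword iDir t then 1 else 0)
          else 0) := by
      intro k _
      by_cases hc : u.take k = List.replicate k (iDir t)
      · rw [if_pos hc]
        rw [MvPolynomial.C_mul_X_pow_eq_monomial, MvPolynomial.coeff_monomial_mul']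
        match k, hc with
        | 0, hc =>
          rw [if_pos (by simp), if_neg (by omega)]
          have h0 : mu (t+1) - Finsupp.single t 0 = mu (t+1) := by simp
          rw [h0, coeff_zero_of_unsupported (Vp_supported iDir t _)
            (mem_support_mu_succ t) (by simp)]
          simp
        | 1, hc =>
          have hle : Finsupp.single t 1 ≤ mu (t+1) := by
            rw [Finsupp.le_iff]
            intro j hj
            rw [Finsupp.mem_support_iff, Finsupp.single_apply] at hj
            have : t = j := by by_contra hne; rw [if_neg hne] at hj; exact hj rfl
            subst this
            rw [Finsupp.single_apply, if_pos rfl, mu_apply, if_pos (Nat.lt_succ_self t)]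
          rw [if_pos hle, if_pos rfl]
          have hsub : mu (t+1) - Finsupp.single t 1 = mu t := by
            rw [mu_succ, add_tsub_cancel_left]
          rw [hsub, ih]
          have ht1 : u.take 1 = [iDir t] := hc
          by_cases hdr : u.drop 1 = dword iDir t
          · rw [if_pos hdr, if_pos ⟨ht1, hdr⟩]
            simp
          · rw [if_neg hdr, if_neg (fun h => hdr h.2)]
            simp
        | (m+2), hc =>
          have hnle : ¬ Finsupp.single t (m+2) ≤ mu (t+1) := by
            intro hle
            have := hle t
            rw [Finsupp.single_apply, if_pos rfl, mu_apply, if_pos (Nat.lt_succ_self t)] at this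
            omega
          rw [if_neg hnle, if_neg (by omega)]
      · rw [if_neg hc, MvPolynomial.coeff_zero]
        by_cases hk1 : k = 1
        · subst hk1
          rw [if_pos rfl, if_neg]
          intro ⟨ha, _⟩
          exact hc (by rw [ha]; rfl)
        · rw [if_neg hk1]
    rw [Finset.sum_congr rfl hterm,
      Finset.sum_ite_eq' (Finset.range (u.length + 1)) 1]
    cases u with
    | nil =>
      rw [if_neg (by simp)]
      have : dword iDir (t+1) = iDir t :: dword iDir t := rfl
      rw [this, if_neg (by simp)]
    | cons a u' =>
      rw [if_pos (by simp)]
      have hdw : dword iDir (t+1) = iDir t :: dword iDir t := rfl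
      rw [hdw]
      have h1 : (a :: u').take 1 = [a] := rfl
      have h2 : (a :: u').drop 1 = u' := rfl
      rw [h1, h2]
      by_cases hh : a = iDir t ∧ u' = dword iDir t
      · rw [if_pos ⟨by rw [hh.1], hh.2⟩, if_pos (by rw [hh.1, hh.2])]
      · rw [if_neg, if_neg]
        · intro h
          rw [List.cons.injEq] at h
          exact hh h
        · intro ⟨ha, hb⟩
          rw [List.cons.injEq] at ha
          exact hh ⟨ha.1, hb⟩

lemma pathX_PWL (n : ℕ) (hn : 0 < n) (iDir : ℕ → Fin d) (lam : ℕ → ℝ) :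
    PWLPath d (n : ℝ) (pathX n iDir lam) := by
  constructor
  · exact (pathX_continuous n iDir lam).continuousOn
  · refine ⟨n, fun j => (j : ℝ), hn, by norm_num, rfl, ?_, ?_⟩
    · intro j _
      show (j : ℝ) < ((j + 1 : ℕ) : ℝ)
      exact_mod_cast Nat.lt_succ_self j
    · intro j hj
      refine ⟨fun i => coefP iDir lam j i, fun i => bSeg iDir lam j i, ?_⟩
      intro s hs i
      have : s ∈ Set.Icc (j : ℝ) ((j : ℝ) + 1) := by
        convert hs using 2
        push_cast
        ring
      exact pathX_affine n iDir lam hj this i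

lemma dword_eq_reverse (w : Word d) (i0 : Fin d) :
    dword (fun j => w.getD j i0) w.length = w.reverse := by
  suffices h : ∀ t, t ≤ w.length → dword (fun j => w.getD j i0) t = (w.take t).reverse by
    rw [h w.length le_rfl, List.take_length]
  intro t
  induction t with
  | zero => intro _; rfl
  | succ t ih =>
    intro ht
    have htl : t < w.length := ht
    have : dword (fun j => w.getD j i0) (t+1) =
        w.getD t i0 :: dword (fun j => w.getD j i0) t := rfl
    rw [this, ih htl.le, List.getD_eq_getElem w i0 htl]
    rw [List.take_succ, List.getElem?_eq_getElem htl]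
    rw [List.reverse_append]
    rfl

end SigProof

open SigProof in
/-- For every nonzero `z ∈ T(ℝ^d)` there is a piecewise linear path `X : [0,T] → ℝ^d`
with `⟨z, S(X)_{0,T}⟩ ≠ 0`. -/
theorem exists_piecewise_linear_path_nonzero_pairing (d : ℕ) (hd : 1 ≤ d)
    (z : Ten d) (hz : z ≠ 0) :
    ∃ (T : ℝ) (X : ℝ → Fin d → ℝ), 0 < T ∧ PWLPath d T X ∧ sigPair X z T ≠ 0 := by
  classical
  by_cases hone : ∀ w ∈ z.support, w = []
  · -- z is supported on the empty word
    obtain ⟨w0, hw0⟩ : ∃ w, z w ≠ 0 := by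
      by_contra h
      push_neg at h
      exact hz (Finsupp.ext h)
    have hw0mem : w0 ∈ z.support := Finsupp.mem_support_iff.mpr hw0
    have hw0nil : w0 = [] := hone w0 hw0mem
    subst hw0nil
    have hsupp : z.support = {([] : Word d)} := by
      apply Finset.ext
      intro w
      simp only [Finset.mem_singleton]
      constructor
      · exact fun h => hone w h
      · intro h; subst h; exact hw0mem
    refine ⟨1, fun s _ => s, one_pos, ?_, ?_⟩
    · constructor
      · exact (continuous_pi fun _ => continuous_id).continuousOn
      · refine ⟨1, fun j => (j : ℝ), one_pos, by norm_num, by norm_num, ?_, ?_⟩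
        · intro j _
          show (j : ℝ) < ((j + 1 : ℕ) : ℝ)
          exact_mod_cast Nat.lt_succ_self j
        · intro j _
          exact ⟨fun _ => 1, fun _ => 0, fun s _ i => by ring⟩
    · rw [sigPair, Finsupp.sum, hsupp, Finset.sum_singleton]
      have : sigCoeff (fun s (_ : Fin d) => s) [] 1 = 1 := rfl
      rw [this, mul_one]
      exact hw0
  · -- main case
    push_neg at hone
    obtain ⟨wst, hmem, hne⟩ := hone
    set n := wst.length with hn
    have hnpos : 0 < n := List.length_pos_iff.mpr hne
    set iDir : ℕ → Fin d := fun j => wst.getD j ⟨0, hd⟩ with hiDir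
    set P : MvPolynomial ℕ ℝ :=
      z.sum fun w c => MvPolynomial.C c * Vp iDir n w.reverse with hP
    have hdw : dword iDir n = wst.reverse := dword_eq_reverse wst ⟨0, hd⟩
    have hcoeff : MvPolynomial.coeff (mu n) P = z wst := by
      rw [hP, Finsupp.sum, MvPolynomial.coeff_sum]
      have : ∀ w ∈ z.support,
          MvPolynomial.coeff (mu n) (MvPolynomial.C (z w) * Vp iDir n w.reverse) =
          (if w = wst then z w else 0) := by
        intro w _
        rw [MvPolynomial.coeff_C_mul, coeff_mu_Vp, hdw]
        by_cases h : w = wst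
        · rw [if_pos (by rw [h]), if_pos h, mul_one]
        · rw [if_neg (fun hc => h (List.reverse_injective hc)), if_neg h, mul_zero]
      rw [Finset.sum_congr rfl this, Finset.sum_ite_eq' z.support wst, if_pos hmem]
    have hzw : z wst ≠ 0 := Finsupp.mem_support_iff.mp hmem
    have hPne : P ≠ 0 := fun h => hzw (by rw [← hcoeff, h, MvPolynomial.coeff_zero])
    have hlam : ∃ lam : ℕ → ℝ, MvPolynomial.eval lam P ≠ 0 := by
      by_contra h
      push_neg at h
      exact hPne (MvPolynomial.funext fun x => by rw [h x, map_zero])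
    obtain ⟨lam, hlam⟩ := hlam
    refine ⟨(n : ℝ), pathX n iDir lam, by exact_mod_cast hnpos,
      pathX_PWL n hnpos iDir lam, ?_⟩
    have : sigPair (pathX n iDir lam) z (n : ℝ) = MvPolynomial.eval lam P := by
      rw [sigPair, hP, Finsupp.sum, Finsupp.sum, map_sum]
      apply Finset.sum_congr rfl
      intro w _
      rw [map_mul, MvPolynomial.eval_C]
      congr 1
      exact sigRev_nat n iDir lam n le_rfl w.reverse
    rw [this]
    exact hlam

end
end

section
/- Let (Ω, ℱ, (ℱ_k)_{k∈ℕ}, ℙ) be a filtered probability space and let (a_k)_{k∈ℕ} and (b_k)_{k∈ℕ} be real-valued (ℱ_k)-martingales such that a_k and b_k are square-integrable for every k. Then the process (DiscreteArea(a,b)_ℓ)_{ℓ∈ℕ}, where DiscreteArea(a,b)_ℓ := Σ_{i=0}^{ℓ−1} (a_{i+1} b_i − b_{i+1} a_i) and DiscreteArea(a,b)_0 := 0, is an (ℱ_ℓ)-martingale. -/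
open MeasureTheory

lemma mul_integrable_of_memL2 {Ω : Type*} {m0 : MeasurableSpace Ω} {μ : Measure Ω}
    {f g : Ω → ℝ} (hf : MemLp f 2 μ) (hg : MemLp g 2 μ) :
    Integrable (fun ω => f ω * g ω) μ := by
  have h : MemLp (f • g) 1 μ := hg.smul hf
    (hpqr := ⟨by rw [ENNReal.inv_two_add_inv_two, inv_one]⟩)
  exact memLp_one_iff_integrable.mp h

/-- If `(a_k)` and `(b_k)` are square-integrable real martingales with respect to a
filtration `(ℱ_k)` on a probability space, then the discrete area process
`DiscreteArea(a,b)_ℓ = Σ_{i=0}^{ℓ−1} (a_{i+1} b_i − b_{i+1} a_i)` is an `(ℱ_ℓ)`-martingale. -/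
theorem discreteArea_martingale {Ω : Type*} {m0 : MeasurableSpace Ω}
    {μ : Measure Ω} [IsProbabilityMeasure μ] (ℱ : Filtration ℕ m0)
    (a b : ℕ → Ω → ℝ)
    (ha : Martingale a ℱ μ) (hb : Martingale b ℱ μ)
    (ha2 : ∀ k, MemLp (a k) 2 μ) (hb2 : ∀ k, MemLp (b k) 2 μ) :
    Martingale
      (fun ℓ ω => ∑ i ∈ Finset.range ℓ, (a (i + 1) ω * b i ω - b (i + 1) ω * a i ω))
      ℱ μ := by
  have hint : ∀ i, Integrable (fun ω => a (i + 1) ω * b i ω - b (i + 1) ω * a i ω) μ :=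
    fun i => (mul_integrable_of_memL2 (ha2 (i + 1)) (hb2 i)).sub
      (mul_integrable_of_memL2 (hb2 (i + 1)) (ha2 i))
  have hsumint : ∀ ℓ, Integrable
      (fun ω => ∑ i ∈ Finset.range ℓ, (a (i + 1) ω * b i ω - b (i + 1) ω * a i ω)) μ :=
    fun ℓ => integrable_finset_sum _ (fun i _ => hint i)
  refine martingale_nat ?_ hsumint ?_
  · intro ℓ
    apply Finset.stronglyMeasurable_fun_sum
    intro i hi
    have hi' : i + 1 ≤ ℓ := Finset.mem_range.mp hi
    exact (((ha.stronglyAdapted (i + 1)).mono (ℱ.mono hi')).mul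
        ((hb.stronglyAdapted i).mono (ℱ.mono (le_of_lt hi')))).sub
      (((hb.stronglyAdapted (i + 1)).mono (ℱ.mono hi')).mul
        ((ha.stronglyAdapted i).mono (ℱ.mono (le_of_lt hi'))))
  · intro ℓ
    simp only [Finset.sum_range_succ]
    refine (Filter.EventuallyEq.symm ?_)
    have key : μ[fun ω => a (ℓ + 1) ω * b ℓ ω - b (ℓ + 1) ω * a ℓ ω | ℱ ℓ]
        =ᵐ[μ] (fun ω => 0 : Ω → ℝ) := by
      have h1 : μ[fun ω => b ℓ ω * a (ℓ + 1) ω | ℱ ℓ] =ᵐ[μ]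
          (b ℓ) * μ[a (ℓ + 1) | ℱ ℓ] :=
        condExp_mul_of_stronglyMeasurable_left (hb.stronglyAdapted ℓ)
          (by simpa [mul_comm, Pi.mul_def] using mul_integrable_of_memL2 (ha2 (ℓ + 1)) (hb2 ℓ))
          (ha.integrable (ℓ + 1))
      have h2 : μ[fun ω => a ℓ ω * b (ℓ + 1) ω | ℱ ℓ] =ᵐ[μ]
          (a ℓ) * μ[b (ℓ + 1) | ℱ ℓ] :=
        condExp_mul_of_stronglyMeasurable_left (ha.stronglyAdapted ℓ)
          (by simpa [mul_comm, Pi.mul_def] using mul_integrable_of_memL2 (hb2 (ℓ + 1)) (ha2 ℓ))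
          (hb.integrable (ℓ + 1))
      have hsub : μ[fun ω => a (ℓ + 1) ω * b ℓ ω - b (ℓ + 1) ω * a ℓ ω | ℱ ℓ]
          =ᵐ[μ] μ[fun ω => b ℓ ω * a (ℓ + 1) ω | ℱ ℓ] - μ[fun ω => a ℓ ω * b (ℓ + 1) ω | ℱ ℓ] := by
        have := condExp_sub (μ := μ) (m := ℱ ℓ)
          (f := fun ω => b ℓ ω * a (ℓ + 1) ω) (g := fun ω => a ℓ ω * b (ℓ + 1) ω)
          (by simpa [mul_comm] using mul_integrable_of_memL2 (ha2 (ℓ + 1)) (hb2 ℓ))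
          (by simpa [mul_comm] using mul_integrable_of_memL2 (hb2 (ℓ + 1)) (ha2 ℓ))
        simpa [mul_comm, Pi.sub_apply, sub_eq_add_neg, Pi.add_def, Pi.neg_def] using this
      refine hsub.trans ?_
      filter_upwards [h1, h2, ha.condExp_ae_eq (Nat.le_succ ℓ), hb.condExp_ae_eq (Nat.le_succ ℓ)]
        with ω e1 e2 ea eb
      simp only [Pi.sub_apply, Pi.mul_apply] at *
      rw [e1, e2, ea, eb]
      ring
    have hcsum : μ[fun ω => (∑ i ∈ Finset.range ℓ,
          (a (i + 1) ω * b i ω - b (i + 1) ω * a i ω))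
          + (a (ℓ + 1) ω * b ℓ ω - b (ℓ + 1) ω * a ℓ ω) | ℱ ℓ]
        =ᵐ[μ] μ[fun ω => ∑ i ∈ Finset.range ℓ,
            (a (i + 1) ω * b i ω - b (i + 1) ω * a i ω) | ℱ ℓ]
          + μ[fun ω => a (ℓ + 1) ω * b ℓ ω - b (ℓ + 1) ω * a ℓ ω | ℱ ℓ] :=
      condExp_add (hsumint ℓ) (hint ℓ) _
    have hself : μ[fun ω => ∑ i ∈ Finset.range ℓ,
          (a (i + 1) ω * b i ω - b (i + 1) ω * a i ω) | ℱ ℓ]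
        =ᵐ[μ] fun ω => ∑ i ∈ Finset.range ℓ,
          (a (i + 1) ω * b i ω - b (i + 1) ω * a i ω) := by
      refine Filter.EventuallyEq.of_eq (condExp_of_stronglyMeasurable (ℱ.le ℓ) ?_ (hsumint ℓ))
      apply Finset.stronglyMeasurable_fun_sum
      intro i hi
      have hi' : i + 1 ≤ ℓ := Finset.mem_range.mp hi
      exact (((ha.stronglyAdapted (i + 1)).mono (ℱ.mono hi')).mul
          ((hb.stronglyAdapted i).mono (ℱ.mono (le_of_lt hi')))).sub
        (((hb.stronglyAdapted (i + 1)).mono (ℱ.mono hi')).mul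
          ((ha.stronglyAdapted i).mono (ℱ.mono (le_of_lt hi'))))
    filter_upwards [hcsum, hself, key] with ω h1 h2 h3
    simp only [Pi.add_apply] at *
    rw [h1, h2, h3, add_zero]
end

section
/- Let V be a vector space over a field of characteristic different from 2, let t: V × V → V be a bilinear antisymmetric map, and set J(x,y,z) := t(t(x,y),z) + t(t(y,z),x) + t(t(z,x),y). Then the following are equivalent: (I) t(t(x,y), t(z,y)) = t(J(x,y,z), y) for all x,y,z ∈ V; (II) t(t(a,b),t(c,d)) + t(t(a,d),t(c,b)) = t(J(a,b,c),d) + t(J(a,d,c),b) for all a,b,c,d ∈ V; (III) 2·t(t(a,b),t(c,d)) = t(J(a,b,c),d) + t(J(a,d,c),b) + t(J(b,a,d),c) + t(J(b,c,d),a) for all a,b,c,d ∈ V. -/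
/-- The Jacobiator of a bilinear operation `t`. -/
def jacobiator {K V : Type*} [Field K] [AddCommGroup V] [Module K V]
    (t : V →ₗ[K] V →ₗ[K] V) (x y z : V) : V :=
  t (t x y) z + t (t y z) x + t (t z x) y

/-- Over a field of characteristic different from 2, the three formulations of the
Tortkara identity for a bilinear antisymmetric operation `t` are equivalent. -/
theorem tortkara_identities_equivalent {K V : Type*} [Field K]
    [AddCommGroup V] [Module K V] (hchar : ringChar K ≠ 2)
    (t : V →ₗ[K] V →ₗ[K] V) (hanti : ∀ x y : V, t x y = - t y x) :
    ((∀ x y z : V, t (t x y) (t z y) = t (jacobiator t x y z) y) ↔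
      (∀ a b c d : V,
        t (t a b) (t c d) + t (t a d) (t c b) =
          t (jacobiator t a b c) d + t (jacobiator t a d c) b)) ∧
    ((∀ a b c d : V,
        t (t a b) (t c d) + t (t a d) (t c b) =
          t (jacobiator t a b c) d + t (jacobiator t a d c) b) ↔
      (∀ a b c d : V,
        (2 : K) • t (t a b) (t c d) =
          t (jacobiator t a b c) d + t (jacobiator t a d c) b +
            t (jacobiator t b a d) c + t (jacobiator t b c d) a)) := by
  have htwo : (2 : K) ≠ 0 := Ring.two_ne_zero hchar
  have hJ : ∀ x y z : V, jacobiator t z y x = - jacobiator t x y z := by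
    intro x y z
    simp only [jacobiator]
    rw [hanti z y, hanti y x, hanti x z]
    simp only [map_neg, LinearMap.neg_apply]
    abel
  constructor
  · constructor
    · intro hI a b c d
      have h1 := hI a (b + d) c
      have h2 := hI a b c
      have h3 := hI a d c
      simp only [jacobiator, map_add, LinearMap.add_apply] at h1 h2 h3 ⊢
      linear_combination (norm := module) h1 - h2 - h3
    · intro hII x y z
      have h := hII x y z y
      apply smul_right_injective V htwo
      beta_reduce
      rw [two_smul, two_smul]
      exact h
  · constructor
    · intro hII a b c d
      have h1 := hII a b c d
      have h2 := hII b a d c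
      have e1 : t (t b a) (t d c) = t (t a b) (t c d) := by
        rw [hanti b a, hanti d c]
        simp
      have e2 : t (t b c) (t d a) = - t (t a d) (t c b) := by
        rw [hanti b c, hanti d a]
        simp only [map_neg, LinearMap.neg_apply, neg_neg]
        exact hanti _ _
      rw [e1, e2] at h2
      linear_combination (norm := module) h1 + h2
    · intro hIII a b c d
      have h1 := hIII a b c d
      have h2 := hIII a d c b
      rw [hJ b a d, hJ b c d] at h2
      simp only [map_neg, LinearMap.neg_apply] at h2
      apply smul_right_injective V htwo
      beta_reduce
      linear_combination (norm := module) h1 + h2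
end
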